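/- arXiv:1901.04861 — 11 statements merged into one kernel-verified Lean document; each statement's English description precedes it below -/
import Mathlib

section
/- Let φ : ℝ → ℝ be given by φ(θ) = (max{θ,0})², and for θ ∈ ℝ define φ′_θ : ℝ → ℝ by φ′_θ(h) = 2θh if θ > 0 and φ′_θ(h) = 0 if θ ≤ 0. Then for every θ ∈ ℝ, every sequence (t_n) with t_n ↓ 0, and every sequence (h_n) of reals with h_n → h ∈ ℝ: (a) (φ(θ + t_n h_n) − φ(θ))/t_n → φ′_θ(h); and (b) (φ(θ + t_n h_n) − φ(θ) − t_n φ′_θ(h_n))/t_n² converges to h² if θ > 0, to (max{h,0})² if θ = 0, and to 0 if θ < 0. (Thus φ is first order Hadamard directionally differentiable everywhere with first order derivative degenerate for θ ≤ 0, and second order Hadamard directionally differentiable with the stated second order derivative.) -/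
open Filter Topology

/-!
Write `φ θ = (max θ 0)²`. Along `θ + tₙhₙ → θ` the three cases separate. For `θ < 0`, eventually
`φ(θ + tₙhₙ) = φ θ = 0`, so both quotients vanish eventually. For `θ > 0`, eventually
`φ(θ + tₙhₙ) = (θ + tₙhₙ)²`, and the quotients are exactly `2θhₙ + tₙhₙ²` and `hₙ²`. For `θ = 0`,
positive homogeneity gives `φ(tₙhₙ) = tₙ² (max hₙ 0)²`.
-/

section HadamardQuotients

variable {α : Type*} {l : Filter α} {t s : α → ℝ} {θ h : ℝ}

theorem tendsto_add_mul_of_tendsto_zero (ht : Tendsto t l (𝓝 0)) (hs : Tendsto s l (𝓝 h)) :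
    Tendsto (fun n => θ + t n * s n) l (𝓝 θ) := by
  simpa using tendsto_const_nhds.add (ht.mul hs)

theorem sq_max_mul_zero_of_nonneg {a x : ℝ} (ha : 0 ≤ a) :
    max (a * x) 0 ^ 2 = a ^ 2 * max x 0 ^ 2 := by
  rw [← mul_zero a, ← mul_max_of_nonneg _ _ ha, mul_zero, mul_pow]

theorem tendsto_sq_max_zero_quotients_of_neg (hθ : θ < 0) (ht : Tendsto t l (𝓝 0))
    (hs : Tendsto s l (𝓝 h)) :
    Tendsto (fun n => (max (θ + t n * s n) 0 ^ 2 - max θ 0 ^ 2) / t n) l (𝓝 0) ∧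
    Tendsto (fun n => (max (θ + t n * s n) 0 ^ 2 - max θ 0 ^ 2) / t n ^ 2) l (𝓝 0) := by
  have hdiff : ∀ᶠ n in l, max (θ + t n * s n) 0 ^ 2 - max θ 0 ^ 2 = 0 := by
    filter_upwards [(tendsto_add_mul_of_tendsto_zero ht hs).eventually (eventually_lt_nhds hθ)]
      with n hn
    rw [max_eq_right hn.le, max_eq_right hθ.le, sub_self]
  exact ⟨tendsto_const_nhds.congr' (hdiff.mono fun n hn => by simp [hn]),
    tendsto_const_nhds.congr' (hdiff.mono fun n hn => by simp [hn])⟩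

theorem tendsto_sq_max_zero_quotients_of_pos (hθ : 0 < θ) (htpos : ∀ᶠ n in l, t n ≠ 0)
    (ht : Tendsto t l (𝓝 0)) (hs : Tendsto s l (𝓝 h)) :
    Tendsto (fun n => (max (θ + t n * s n) 0 ^ 2 - max θ 0 ^ 2) / t n) l (𝓝 (2 * θ * h)) ∧
    Tendsto (fun n => (max (θ + t n * s n) 0 ^ 2 - max θ 0 ^ 2 - t n * (2 * θ * s n)) / t n ^ 2)
      l (𝓝 (h ^ 2)) := by
  have hpos := (tendsto_add_mul_of_tendsto_zero ht hs).eventually (eventually_gt_nhds hθ)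
  constructor
  · have hlim : Tendsto (fun n => 2 * θ * s n + t n * s n ^ 2) l (𝓝 (2 * θ * h)) := by
      simpa using (hs.const_mul (2 * θ)).add (ht.mul (hs.pow 2))
    refine hlim.congr' ?_
    filter_upwards [hpos, htpos] with n hn htn
    rw [max_eq_left hn.le, max_eq_left hθ.le]
    field_simp
    ring
  · refine (hs.pow 2).congr' ?_
    filter_upwards [hpos, htpos] with n hn htn
    rw [max_eq_left hn.le, max_eq_left hθ.le]
    field_simp
    ring

theorem tendsto_sq_max_zero_quotients_of_zero (htpos : ∀ᶠ n in l, 0 < t n)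
    (ht : Tendsto t l (𝓝 0)) (hs : Tendsto s l (𝓝 h)) :
    Tendsto (fun n => max (t n * s n) 0 ^ 2 / t n) l (𝓝 0) ∧
    Tendsto (fun n => max (t n * s n) 0 ^ 2 / t n ^ 2) l (𝓝 (max h 0 ^ 2)) := by
  have hmax : Tendsto (fun n => max (s n) 0 ^ 2) l (𝓝 (max h 0 ^ 2)) :=
    (hs.max tendsto_const_nhds).pow 2
  constructor
  · refine (by simpa using ht.mul hmax : Tendsto (fun n => t n * max (s n) 0 ^ 2) l (𝓝 0)).congr' ?_
    filter_upwards [htpos] with n htn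
    rw [sq_max_mul_zero_of_nonneg htn.le]
    field_simp
  · refine hmax.congr' ?_
    filter_upwards [htpos] with n htn
    rw [sq_max_mul_zero_of_nonneg htn.le]
    field_simp

end HadamardQuotients

/-- Moment inequality functional `φ(θ) = (max{θ,0})²`: first order Hadamard directional
derivative `φ′_θ(h) = 2θh` for `θ > 0` and `0` for `θ ≤ 0`, and second order Hadamard
directional derivative `h²` for `θ > 0`, `(max{h,0})²` for `θ = 0`, and `0` for `θ < 0`. -/
theorem moment_inequality_first_and_second_order_hadamard
    (θ : ℝ) (t : ℕ → ℝ) (ht : ∀ n, 0 < t n) (htlim : Tendsto t atTop (𝓝 0))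
    (hseq : ℕ → ℝ) (h : ℝ) (hconv : Tendsto hseq atTop (𝓝 h)) :
    Tendsto (fun n => ((max (θ + t n * hseq n) 0) ^ 2 - (max θ 0) ^ 2) / t n)
        atTop (𝓝 (if 0 < θ then 2 * θ * h else 0)) ∧
    Tendsto (fun n =>
        ((max (θ + t n * hseq n) 0) ^ 2 - (max θ 0) ^ 2
          - t n * (if 0 < θ then 2 * θ * hseq n else 0)) / (t n) ^ 2)
        atTop (𝓝 (if 0 < θ then h ^ 2 else if θ = 0 then (max h 0) ^ 2 else 0)) := by
  rcases lt_trichotomy θ 0 with hθ | rfl | hθ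
  · simpa [hθ.not_gt, hθ.ne] using tendsto_sq_max_zero_quotients_of_neg hθ htlim hconv
  · simpa using tendsto_sq_max_zero_quotients_of_zero (.of_forall ht) htlim hconv
  · simpa [hθ] using tendsto_sq_max_zero_quotients_of_pos hθ
      (.of_forall fun n => (ht n).ne') htlim hconv
end

section
/- (Lemma C.1(i), stochastic dominance, first order derivative.) Let w : ℝ → [0,∞) be Borel measurable with ∫_ℝ w(u) du < ∞ (Lebesgue integral). For a pair θ = (θ⁽¹⁾, θ⁽²⁾) of bounded Borel measurable functions ℝ → ℝ define φ(θ) = ∫_ℝ max{θ⁽¹⁾(u) − θ⁽²⁾(u), 0}² w(u) du and B₊(θ) = {u ∈ ℝ : θ⁽¹⁾(u) > θ⁽²⁾(u)}. Then for every such θ, every sequence t_n ↓ 0, and every sequence of pairs h_n = (h_n⁽¹⁾, h_n⁽²⁾) of bounded Borel measurable functions with ‖h_n⁽¹⁾ − h⁽¹⁾‖_∞ → 0 and ‖h_n⁽²⁾ − h⁽²⁾‖_∞ → 0 for a pair h = (h⁽¹⁾, h⁽²⁾) of bounded Borel measurable functions, one has (φ(θ + t_n h_n) − φ(θ))/t_n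 → 2 ∫_{B₊(θ)} (θ⁽¹⁾(u) − θ⁽²⁾(u)) (h⁽¹⁾(u) − h⁽²⁾(u)) w(u) du. -/
/-!
Write `Δ = θ⁽¹⁾ - θ⁽²⁾`, `gₙ = hₙ⁽¹⁾ - hₙ⁽²⁾` and `F x = max x 0 ^ 2`, so that the difference
quotient is `∫ (F (Δ + tₙ gₙ) - F Δ) / tₙ · w`. The function `F` is `C¹` with `F' x = 2 max x 0`,
so the integrand converges pointwise to `F' Δ · g · w`. Since `Δ` is bounded and `gₙ → g`
uniformly, all arguments of `F` eventually lie in one compact interval, on which `F` is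
Lipschitz; the integrand is then dominated by a multiple of `|w|`, and dominated convergence
applies.
-/

open Filter Topology MeasureTheory

theorem hasDerivAt_sq_max_zero (x : ℝ) :
    HasDerivAt (fun y => max y 0 ^ 2) (2 * max x 0) x := by
  rcases lt_trichotomy x 0 with hx | rfl | hx
  · have hzero : (fun y : ℝ => max y 0 ^ 2) =ᶠ[𝓝 x] fun _ => 0 := by
      filter_upwards [gt_mem_nhds hx] with y hy
      simp [max_eq_right hy.le]
    simpa [max_eq_right hx.le] using (hasDerivAt_const x (0 : ℝ)).congr_of_eventuallyEq hzero
  · rw [hasDerivAt_iff_isLittleO_nhds_zero]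
    refine Asymptotics.IsBigO.trans_isLittleO ?_ (Asymptotics.isLittleO_pow_id one_lt_two)
    refine Asymptotics.IsBigO.of_bound 1 (.of_forall fun h => ?_)
    simp only [zero_add, max_self, ne_eq, OfNat.ofNat_ne_zero, not_false_eq_true, zero_pow,
      sub_zero, mul_zero, smul_zero, norm_pow, Real.norm_eq_abs, one_mul]
    exact pow_le_pow_left₀ (abs_nonneg _) (abs_max_le_max_abs_abs.trans (by simp)) 2
  · have hsq : (fun y : ℝ => max y 0 ^ 2) =ᶠ[𝓝 x] fun y => y ^ 2 := by
      filter_upwards [lt_mem_nhds hx] with y hy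
      rw [max_eq_left hy.le]
    simpa [max_eq_left hx.le] using (hasDerivAt_pow 2 x).congr_of_eventuallyEq hsq

theorem HasDerivAt.tendsto_slope_add_mul {F : ℝ → ℝ} {F' a b : ℝ} (hF : HasDerivAt F F' a)
    {t c : ℕ → ℝ} (ht : ∀ n, t n ≠ 0) (ht0 : Tendsto t atTop (𝓝 0))
    (hc : Tendsto c atTop (𝓝 b)) :
    Tendsto (fun n => (F (a + t n * c n) - F a) / t n) atTop (𝓝 (F' * b)) := by
  have hd : Tendsto (fun n => t n * c n) atTop (𝓝 0) := by simpa using ht0.mul hc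
  have hcd : (fun n => (t n)⁻¹ • (t n * c n)) = c := by
    ext n
    simp [inv_mul_cancel_left₀ (ht n)]
  have := hF.hasFDerivAt.hasFDerivWithinAt.lim (s := Set.univ) hd (.of_forall fun _ => trivial)
    (hcd ▸ hc)
  simpa [div_eq_inv_mul, mul_comm F'] using this

theorem exists_abs_sub_le_of_hasDerivAt {F F' : ℝ → ℝ} (hF : ∀ x, HasDerivAt F (F' x) x)
    (hF' : Continuous F') (R : ℝ) :
    ∃ L, 0 ≤ L ∧ ∀ x y, |x| ≤ R → |y| ≤ R → |F y - F x| ≤ L * |y - x| := by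
  obtain ⟨L, hL⟩ := (isCompact_Icc (a := -R) (b := R)).exists_bound_of_continuousOn
    hF'.continuousOn
  refine ⟨max L 0, le_max_right L 0, fun x y hx hy => ?_⟩
  have := (convex_Icc (-R) R).norm_image_sub_le_of_norm_hasDerivWithin_le
    (fun z _ => (hF z).hasDerivWithinAt) (fun z hz => (hL z hz).trans (le_max_left L 0))
    (abs_le.mp hx) (abs_le.mp hy)
  simpa only [Real.norm_eq_abs] using this

theorem abs_slope_comp_add_mul_le {F : ℝ → ℝ} {L R B a b s : ℝ}
    (hL : ∀ x y, |x| ≤ R → |y| ≤ R → |F y - F x| ≤ L * |y - x|) (hL0 : 0 ≤ L)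
    (ha : |a| ≤ R) (hab : |a + s * b| ≤ R) (hs : s ≠ 0) (hb : |b| ≤ B) :
    |(F (a + s * b) - F a) / s| ≤ L * B := by
  have hLip := hL a (a + s * b) ha hab
  rw [add_sub_cancel_left, abs_mul] at hLip
  rw [abs_div, div_le_iff₀ (abs_pos.2 hs)]
  calc _ ≤ L * (|s| * |b|) := hLip
    _ ≤ L * (|s| * B) := by gcongr
    _ = L * B * |s| := by ring

section

variable {ι α : Type*}

theorem exists_forall_abs_sub_le {f g : α → ℝ} (hf : ∃ C, ∀ x, |f x| ≤ C)
    (hg : ∃ C, ∀ x, |g x| ≤ C) : ∃ C, ∀ x, |f x - g x| ≤ C := by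
  obtain ⟨Cf, hCf⟩ := hf
  obtain ⟨Cg, hCg⟩ := hg
  exact ⟨Cf + Cg, fun x => (abs_sub _ _).trans (add_le_add (hCf x) (hCg x))⟩

theorem tendstoUniformly_of_eventually_abs_sub_le {l : Filter ι} {g : ι → α → ℝ} {g₀ : α → ℝ}
    (h : ∀ ε > 0, ∀ᶠ n in l, ∀ x, |g n x - g₀ x| ≤ ε) : TendstoUniformly g g₀ l := by
  refine Metric.tendstoUniformly_iff.2 fun ε hε => ?_
  filter_upwards [h (ε / 2) (half_pos hε)] with n hn x
  rw [Real.dist_eq, abs_sub_comm]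
  exact (hn x).trans_lt (half_lt_self hε)

theorem TendstoUniformly.eventually_abs_le {l : Filter ι} {g : ι → α → ℝ} {g₀ : α → ℝ}
    (h : TendstoUniformly g g₀ l) {C : ℝ} (hC : ∀ x, |g₀ x| ≤ C) :
    ∀ᶠ n in l, ∀ x, |g n x| ≤ C + 1 := by
  filter_upwards [Metric.tendstoUniformly_iff.1 h 1 one_pos] with n hn x
  have := abs_sub_abs_le_abs_sub (g n x) (g₀ x)
  rw [← Real.dist_eq, dist_comm] at this
  linarith [hn x, hC x]

end

section

variable {α : Type*} [MeasurableSpace α] {μ : Measure α}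

theorem Continuous.integrable_comp_mul {F : ℝ → ℝ} (hF : Continuous F) {φ w : α → ℝ}
    (hw : Integrable w μ) (hφ : AEStronglyMeasurable φ μ) {R : ℝ} (hφR : ∀ x, |φ x| ≤ R) :
    Integrable (fun x => F (φ x) * w x) μ := by
  obtain ⟨C, hC⟩ := (isCompact_Icc (a := -R) (b := R)).exists_bound_of_continuousOn
    hF.continuousOn
  exact hw.bdd_mul (hF.comp_aestronglyMeasurable hφ)
    (.of_forall fun x => hC _ (abs_le.mp (hφR x)))

theorem integral_setOf_pos_mul {f φ : α → ℝ} (hf : Measurable f) :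
    ∫ x in {x | 0 < f x}, f x * φ x ∂μ = ∫ x, max (f x) 0 * φ x ∂μ := by
  rw [← integral_indicator (measurableSet_lt measurable_const hf)]
  congr 1 with x
  by_cases hx : 0 < f x
  · simp [Set.indicator_of_mem (show x ∈ {x | 0 < f x} from hx), max_eq_left hx.le]
  · simp [Set.indicator_of_notMem (show x ∉ {x | 0 < f x} from hx), max_eq_right (not_lt.1 hx)]

theorem tendsto_slope_integral_comp_add_mul {F F' : ℝ → ℝ} (hF : ∀ x, HasDerivAt F (F' x) x)
    (hF' : Continuous F') {w f g₀ : α → ℝ} {g : ℕ → α → ℝ} {t : ℕ → ℝ}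
    (hw : Integrable w μ) (hf : AEStronglyMeasurable f μ) (hfb : ∃ C, ∀ x, |f x| ≤ C)
    (hg : ∀ n, AEStronglyMeasurable (g n) μ) (hg₀b : ∃ C, ∀ x, |g₀ x| ≤ C)
    (hgg₀ : TendstoUniformly g g₀ atTop) (ht : ∀ n, t n ≠ 0) (ht0 : Tendsto t atTop (𝓝 0)) :
    Tendsto (fun n => (∫ x, F (f x + t n * g n x) * w x ∂μ - ∫ x, F (f x) * w x ∂μ) / t n)
      atTop (𝓝 (∫ x, F' (f x) * g₀ x * w x ∂μ)) := by
  obtain ⟨Cf, hCf⟩ := hfb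
  obtain ⟨Cg, hCg⟩ := hg₀b
  set R := Cf + (Cg + 1)
  obtain ⟨L, hL0, hL⟩ := exists_abs_sub_le_of_hasDerivAt hF hF' R
  have hFc : Continuous F := continuous_iff_continuousAt.2 fun x => (hF x).continuousAt
  have hfR : ∀ x, |f x| ≤ R := fun x => by linarith [hCf x, abs_nonneg (g₀ x), hCg x]
  have ht1 : ∀ᶠ n in atTop, |t n| ≤ 1 := by
    simpa using ht0.eventually (Metric.closedBall_mem_nhds 0 one_pos)
  have hgb := hgg₀.eventually_abs_le hCg
  have hfgR : ∀ᶠ n in atTop, ∀ x, |f x + t n * g n x| ≤ R := by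
    filter_upwards [ht1, hgb] with n htn hgn x
    calc |f x + t n * g n x| ≤ |f x| + |t n| * |g n x| := by rw [← abs_mul]; exact abs_add_le _ _
      _ ≤ Cf + 1 * (Cg + 1) := by gcongr; exacts [hCf x, hgn x]
      _ = R := by ring
  have hfg : ∀ n, AEStronglyMeasurable (fun x => f x + t n * g n x) μ := fun n => by fun_prop
  have hslope : ∀ᶠ n in atTop,
      ∫ x, (F (f x + t n * g n x) - F (f x)) / t n * w x ∂μ
        = (∫ x, F (f x + t n * g n x) * w x ∂μ - ∫ x, F (f x) * w x ∂μ) / t n := by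
    filter_upwards [hfgR] with n hn
    rw [← integral_sub (hFc.integrable_comp_mul hw (hfg n) hn) (hFc.integrable_comp_mul hw hf hfR),
      ← integral_div]
    congr 1 with x
    ring
  refine Tendsto.congr' hslope (tendsto_integral_filter_of_dominated_convergence
    (fun x => L * (Cg + 1) * ‖w x‖) (.of_forall fun n => ?_) ?_ (hw.norm.const_mul _)
    (.of_forall fun x => ?_))
  · have := hfg n
    have := hw.1
    fun_prop
  · filter_upwards [hgb, hfgR] with n hgn hn
    refine .of_forall fun x => ?_
    rw [norm_mul, Real.norm_eq_abs]
    gcongr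
    exact abs_slope_comp_add_mul_le hL hL0 (hfR x) (hn x) (ht n) (hgn x)
  · exact ((hF (f x)).tendsto_slope_add_mul ht ht0 (hgg₀.tendsto_at x)).mul_const (w x)

end

theorem stochastic_dominance_first_order_hadamard_general
    (w : ℝ → ℝ) (hwint : Integrable w)
    (θ1 θ2 : ℝ → ℝ) (hθ1m : Measurable θ1) (hθ1b : ∃ C, ∀ u, |θ1 u| ≤ C)
    (hθ2m : Measurable θ2) (hθ2b : ∃ C, ∀ u, |θ2 u| ≤ C)
    (t : ℕ → ℝ) (ht : ∀ n, 0 < t n) (htlim : Tendsto t atTop (𝓝 0))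
    (h1 h2 : ℕ → ℝ → ℝ) (hl1 hl2 : ℝ → ℝ)
    (hh1m : ∀ n, Measurable (h1 n))
    (hh2m : ∀ n, Measurable (h2 n))
    (hl1b : ∃ C, ∀ u, |hl1 u| ≤ C)
    (hl2b : ∃ C, ∀ u, |hl2 u| ≤ C)
    (hconv1 : ∀ ε > (0 : ℝ), ∀ᶠ n in atTop, ∀ u, |h1 n u - hl1 u| ≤ ε)
    (hconv2 : ∀ ε > (0 : ℝ), ∀ᶠ n in atTop, ∀ u, |h2 n u - hl2 u| ≤ ε) :
    Tendsto (fun n =>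
        ((∫ u, (max ((θ1 u + t n * h1 n u) - (θ2 u + t n * h2 n u)) 0) ^ 2 * w u)
          - ∫ u, (max (θ1 u - θ2 u) 0) ^ 2 * w u) / t n)
      atTop
      (𝓝 (2 * ∫ u in {u | θ2 u < θ1 u}, (θ1 u - θ2 u) * (hl1 u - hl2 u) * w u)) := by
  have hΔm : Measurable fun u => θ1 u - θ2 u := hθ1m.sub hθ2m
  have hlim := tendsto_slope_integral_comp_add_mul hasDerivAt_sq_max_zero (by fun_prop) hwint
    hΔm.aestronglyMeasurable (exists_forall_abs_sub_le hθ1b hθ2b)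
    (g := fun n u => h1 n u - h2 n u) (fun n => ((hh1m n).sub (hh2m n)).aestronglyMeasurable)
    (exists_forall_abs_sub_le hl1b hl2b)
    ((tendstoUniformly_of_eventually_abs_sub_le hconv1).sub
      (tendstoUniformly_of_eventually_abs_sub_le hconv2))
    (fun n => (ht n).ne') htlim
  have hlimit : 2 * ∫ u in {u | θ2 u < θ1 u}, (θ1 u - θ2 u) * (hl1 u - hl2 u) * w u
      = ∫ u, 2 * max (θ1 u - θ2 u) 0 * (hl1 u - hl2 u) * w u := by
    have hpos : {u | θ2 u < θ1 u} = {u | 0 < θ1 u - θ2 u} := by simp only [sub_pos]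
    simp only [hpos, mul_assoc]
    rw [integral_setOf_pos_mul hΔm, integral_const_mul]
  have hperturb : ∀ n u, (θ1 u + t n * h1 n u) - (θ2 u + t n * h2 n u)
      = θ1 u - θ2 u + t n * (h1 n u - h2 n u) := fun _ _ => by ring
  rw [hlimit]
  simpa only [hperturb] using hlim

/-- Lemma C.1(i): first order Hadamard derivative of the stochastic dominance functional
`φ(θ) = ∫ max{θ⁽¹⁾ − θ⁽²⁾, 0}² w du`, namely
`(φ(θ + t_n h_n) − φ(θ))/t_n → 2∫_{B₊(θ)} (θ⁽¹⁾ − θ⁽²⁾)(h⁽¹⁾ − h⁽²⁾) w du`. -/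
theorem stochastic_dominance_first_order_hadamard
    (w : ℝ → ℝ) (hw0 : ∀ u, 0 ≤ w u) (hwm : Measurable w) (hwint : Integrable w)
    (θ1 θ2 : ℝ → ℝ) (hθ1m : Measurable θ1) (hθ1b : ∃ C, ∀ u, |θ1 u| ≤ C)
    (hθ2m : Measurable θ2) (hθ2b : ∃ C, ∀ u, |θ2 u| ≤ C)
    (t : ℕ → ℝ) (ht : ∀ n, 0 < t n) (htlim : Tendsto t atTop (𝓝 0))
    (h1 h2 : ℕ → ℝ → ℝ) (hl1 hl2 : ℝ → ℝ)
    (hh1m : ∀ n, Measurable (h1 n)) (hh1b : ∀ n, ∃ C, ∀ u, |h1 n u| ≤ C)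
    (hh2m : ∀ n, Measurable (h2 n)) (hh2b : ∀ n, ∃ C, ∀ u, |h2 n u| ≤ C)
    (hl1m : Measurable hl1) (hl1b : ∃ C, ∀ u, |hl1 u| ≤ C)
    (hl2m : Measurable hl2) (hl2b : ∃ C, ∀ u, |hl2 u| ≤ C)
    (hconv1 : ∀ ε > (0 : ℝ), ∀ᶠ n in atTop, ∀ u, |h1 n u - hl1 u| ≤ ε)
    (hconv2 : ∀ ε > (0 : ℝ), ∀ᶠ n in atTop, ∀ u, |h2 n u - hl2 u| ≤ ε) :
    Tendsto (fun n =>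
        ((∫ u, (max ((θ1 u + t n * h1 n u) - (θ2 u + t n * h2 n u)) 0) ^ 2 * w u)
          - ∫ u, (max (θ1 u - θ2 u) 0) ^ 2 * w u) / t n)
      atTop
      (𝓝 (2 * ∫ u in {u | θ2 u < θ1 u}, (θ1 u - θ2 u) * (hl1 u - hl2 u) * w u)) :=
  stochastic_dominance_first_order_hadamard_general w hwint θ1 θ2 hθ1m hθ1b hθ2m hθ2b t ht htlim h1
    h2 hl1 hl2 hh1m hh2m hl1b hl2b hconv1 hconv2
end

section
/- (Lemma C.1(ii), stochastic dominance, second order derivative.) Let w : ℝ → [0,∞) be Borel measurable with ∫_ℝ w(u) du < ∞ (Lebesgue integral). For a pair θ = (θ⁽¹⁾, θ⁽²⁾) of bounded Borel measurable functions ℝ → ℝ define φ(θ) = ∫_ℝ max{θ⁽¹⁾(u) − θ⁽²⁾(u), 0}² w(u) du, B₊(θ) = {u : θ⁽¹⁾(u) > θ⁽²⁾(u)}, and B₀(θ) = {u : θ⁽¹⁾(u) = θ⁽²⁾(u)}. Then for every such θ, every sequence t_n ↓ 0, and every sequence of pairs h_n = (h_n⁽¹⁾, h_n⁽²⁾) of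 bounded Borel measurable functions converging in supremum norm (coordinatewise) to a pair h = (h⁽¹⁾, h⁽²⁾) of bounded Borel measurable functions, the quantity (φ(θ + t_n h_n) − φ(θ) − 2 t_n ∫_{B₊(θ)} (θ⁽¹⁾ − θ⁽²⁾)(h_n⁽¹⁾ − h_n⁽²⁾) w du)/t_n² converges to ∫_{B₀(θ)} max{h⁽¹⁾(u) − h⁽²⁾(u), 0}² w(u) du + ∫_{B₊(θ)} (h⁽¹⁾(u) − h⁽²⁾(u))² w(u) du. -/
open Filter Topology MeasureTheory
open scoped ENNReal

/-!
Write `g = θ⁽¹⁾ − θ⁽²⁾` and `k_n = h_n⁽¹⁾ − h_n⁽²⁾`. The quotient is `∫ q(g, k_n, t_n) w`, where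
`q(a, b, t)` is the second-order difference quotient of `x ↦ (x⁺)²` at `a` in direction `b`; the
first-order term `2 a⁺ b`, integrated, is the one over `B₊(θ)`. As `x ↦ (x⁺)²` has the
`2`-Lipschitz derivative `x ↦ 2 x⁺`, `|q(a, b, t)| ≤ b²`, so the uniform bound on `k_n` dominates
the integrands by a multiple of `|w|`. Pointwise, `q(g, k_n, t_n)` tends to `k²` where `g > 0`, to
`0` where `g < 0`, and equals `(k_n⁺)²` where `g = 0` since `t_n > 0`; dominated convergence
concludes.
-/

noncomputable def posPartSqQuot (a b t : ℝ) : ℝ :=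
  (max (a + t * b) 0 ^ 2 - max a 0 ^ 2 - 2 * t * (max a 0 * b)) / t ^ 2

section PosPartSq

lemma continuous_posPartSqQuot (t : ℝ) :
    Continuous fun p : ℝ × ℝ => posPartSqQuot p.1 p.2 t := by
  unfold posPartSqQuot
  fun_prop

lemma abs_posPart_sq_sub_sub_le (a s : ℝ) :
    |max (a + s) 0 ^ 2 - max a 0 ^ 2 - 2 * max a 0 * s| ≤ s ^ 2 := by
  rw [abs_le]
  rcases le_total a 0 with ha | ha <;> rcases le_total (a + s) 0 with has | has <;>
    simp only [max_eq_left, max_eq_right, ha, has] <;> constructor <;> nlinarith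

lemma abs_posPartSqQuot_le (a b t : ℝ) : |posPartSqQuot a b t| ≤ b ^ 2 := by
  rcases eq_or_ne t 0 with rfl | ht
  · simpa [posPartSqQuot] using sq_nonneg b
  have ht2 : 0 < t ^ 2 := by positivity
  rw [posPartSqQuot, abs_div, abs_of_pos ht2, div_le_iff₀ ht2]
  calc _ = |max (a + t * b) 0 ^ 2 - max a 0 ^ 2 - 2 * max a 0 * (t * b)| := by ring_nf
    _ ≤ (t * b) ^ 2 := abs_posPart_sq_sub_sub_le a (t * b)
    _ = b ^ 2 * t ^ 2 := by ring

lemma posPartSqQuot_of_pos {a b t : ℝ} (ht : t ≠ 0) (ha : 0 < a) (hab : 0 < a + t * b) :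
    posPartSqQuot a b t = b ^ 2 := by
  rw [posPartSqQuot, max_eq_left ha.le, max_eq_left hab.le]
  field_simp
  ring

lemma posPartSqQuot_of_neg {a b t : ℝ} (ha : a < 0) (hab : a + t * b < 0) :
    posPartSqQuot a b t = 0 := by
  simp [posPartSqQuot, max_eq_right ha.le, max_eq_right hab.le]

lemma posPartSqQuot_zero_left {b t : ℝ} (ht : 0 < t) :
    posPartSqQuot 0 b t = max b 0 ^ 2 := by
  rw [posPartSqQuot, zero_add, ← mul_zero t, ← mul_max_of_nonneg _ _ ht.le]
  field_simp
  simp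

variable {ι : Type*} {l : Filter ι} {t b : ι → ℝ} {β : ℝ}

lemma tendsto_const_add_mul (a : ℝ) (ht : Tendsto t l (𝓝[>] 0)) (hb : Tendsto b l (𝓝 β)) :
    Tendsto (fun i => a + t i * b i) l (𝓝 a) := by
  simpa using tendsto_const_nhds.add ((tendsto_nhdsWithin_iff.1 ht).1.mul hb)

lemma tendsto_posPartSqQuot_of_pos {a : ℝ} (ha : 0 < a) (ht : Tendsto t l (𝓝[>] 0))
    (hb : Tendsto b l (𝓝 β)) :
    Tendsto (fun i => posPartSqQuot a (b i) (t i)) l (𝓝 (β ^ 2)) := by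
  refine (hb.pow 2).congr' ?_
  filter_upwards [(tendsto_const_add_mul a ht hb).eventually (lt_mem_nhds ha),
    (tendsto_nhdsWithin_iff.1 ht).2] with i hi hti
  exact (posPartSqQuot_of_pos hti.ne' ha hi).symm

lemma tendsto_posPartSqQuot_of_neg {a : ℝ} (ha : a < 0) (ht : Tendsto t l (𝓝[>] 0))
    (hb : Tendsto b l (𝓝 β)) :
    Tendsto (fun i => posPartSqQuot a (b i) (t i)) l (𝓝 0) := by
  refine tendsto_const_nhds.congr' ?_
  filter_upwards [(tendsto_const_add_mul a ht hb).eventually (gt_mem_nhds ha)] with i hi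
  exact (posPartSqQuot_of_neg ha hi).symm

lemma tendsto_posPartSqQuot_zero_left (ht : Tendsto t l (𝓝[>] 0)) (hb : Tendsto b l (𝓝 β)) :
    Tendsto (fun i => posPartSqQuot 0 (b i) (t i)) l (𝓝 (max β 0 ^ 2)) := by
  refine ((hb.max tendsto_const_nhds).pow 2).congr' ?_
  filter_upwards [(tendsto_nhdsWithin_iff.1 ht).2] with i hti
  exact (posPartSqQuot_zero_left hti).symm

end PosPartSq

section Integral

variable {α : Type*} [MeasurableSpace α] {μ : Measure α}

lemma MeasureTheory.MemLp.sq_of_top {f : α → ℝ} (hf : MemLp f ∞ μ) :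
    MemLp (fun u => f u ^ 2) ∞ μ := by
  simpa only [sq] using hf.mul' hf

lemma MeasureTheory.memLp_top_of_exists_abs_le {f : α → ℝ} (hf : AEStronglyMeasurable f μ)
    (hb : ∃ C, ∀ u, |f u| ≤ C) : MemLp f ∞ μ :=
  let ⟨C, hC⟩ := hb
  memLp_top_of_bound hf C (ae_of_all _ hC)

variable {w g : α → ℝ}

lemma integral_posPartSqQuot_mul {k : α → ℝ} (hw : Integrable w μ) (hg : MemLp g ∞ μ)
    (hk : MemLp k ∞ μ) (t : ℝ) :
    ∫ u, posPartSqQuot (g u) (k u) t * w u ∂μ =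
      ((∫ u, max (g u + t * k u) 0 ^ 2 * w u ∂μ) - (∫ u, max (g u) 0 ^ 2 * w u ∂μ)
        - 2 * t * ∫ u, max (g u) 0 * k u * w u ∂μ) / t ^ 2 := by
  have hA : Integrable (fun u => max (g u + t * k u) 0 ^ 2 * w u) μ :=
    hw.mul_of_top_right (hg.add (hk.const_mul t)).pos_part.sq_of_top
  have hB : Integrable (fun u => max (g u) 0 ^ 2 * w u) μ :=
    hw.mul_of_top_right hg.pos_part.sq_of_top
  have hC : Integrable (fun u => max (g u) 0 * k u * w u) μ :=
    hw.mul_of_top_right (hk.mul' hg.pos_part)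
  have hAB : Integrable (fun u => max (g u + t * k u) 0 ^ 2 * w u - max (g u) 0 ^ 2 * w u) μ :=
    hA.sub hB
  rw [← integral_const_mul, ← integral_sub hA hB, ← integral_sub hAB (hC.const_mul _),
    ← integral_div]
  congr 1 with u
  rw [posPartSqQuot]
  ring

lemma setIntegral_lt_eq_integral_max {a b f : α → ℝ} (ha : Measurable a) (hb : Measurable b) :
    ∫ u in {u | b u < a u}, (a u - b u) * f u ∂μ = ∫ u, max (a u - b u) 0 * f u ∂μ := by
  rw [← integral_indicator (measurableSet_lt hb ha)]
  congr 1 with u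
  by_cases h : b u < a u
  · simp [h, max_eq_left (sub_pos.2 h).le]
  · simp [h, max_eq_right (sub_nonpos.2 (not_lt.1 h))]

variable {ι : Type*} {l : Filter ι} [l.IsCountablyGenerated] [l.NeBot] {k : ι → α → ℝ}
  {κ : α → ℝ} {t : ι → ℝ} {C : ℝ}

lemma tendsto_integral_posPartSqQuot_mul (hw : Integrable w μ) (hg : Measurable g)
    (hk : ∀ i, AEStronglyMeasurable (k i) μ) (hkb : ∀ᶠ i in l, ∀ u, |k i u| ≤ C)
    (hkκ : ∀ u, Tendsto (fun i => k i u) l (𝓝 (κ u))) (ht : Tendsto t l (𝓝[>] 0)) :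
    Tendsto (fun i => ∫ u, posPartSqQuot (g u) (k i u) (t i) * w u ∂μ) l
      (𝓝 ((∫ u in {u | g u = 0}, max (κ u) 0 ^ 2 * w u ∂μ)
        + ∫ u in {u | 0 < g u}, κ u ^ 2 * w u ∂μ)) := by
  have hκ : MemLp κ ∞ μ :=
    memLp_top_of_bound (aestronglyMeasurable_of_tendsto_ae l hk (ae_of_all _ hkκ)) C
      (ae_of_all _ fun u => le_of_tendsto (hkκ u).norm (hkb.mono fun i hi => hi u))
  have hzero : MeasurableSet {u | g u = 0} := measurableSet_eq_fun hg measurable_const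
  have hpos : MeasurableSet {u | 0 < g u} := measurableSet_lt measurable_const hg
  have hκzero : Integrable (fun u => max (κ u) 0 ^ 2 * w u) μ :=
    hw.mul_of_top_right hκ.pos_part.sq_of_top
  have hκpos : Integrable (fun u => κ u ^ 2 * w u) μ := hw.mul_of_top_right hκ.sq_of_top
  rw [← integral_indicator hzero, ← integral_indicator hpos,
    ← integral_add (hκzero.indicator hzero) (hκpos.indicator hpos)]
  refine tendsto_integral_filter_of_dominated_convergence (fun u => C ^ 2 * ‖w u‖)
    (Eventually.of_forall fun i => ?_) (hkb.mono fun i hi => ae_of_all _ fun u => ?_)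
    (hw.norm.const_mul _) (ae_of_all _ fun u => ?_)
  · exact ((continuous_posPartSqQuot (t i)).comp_aestronglyMeasurable
      (hg.aestronglyMeasurable.prodMk (hk i))).mul hw.1
  · rw [norm_mul, Real.norm_eq_abs]
    gcongr
    exact (abs_posPartSqQuot_le _ _ _).trans (sq_le_sq' (abs_le.1 (hi u)).1 (abs_le.1 (hi u)).2)
  · rcases lt_trichotomy (g u) 0 with hu | hu | hu
    · simpa [hu.ne, hu.not_gt] using
        (tendsto_posPartSqQuot_of_neg hu ht (hkκ u)).mul_const (w u)
    · simpa [hu] using (tendsto_posPartSqQuot_zero_left ht (hkκ u)).mul_const (w u)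
    · simpa [hu, hu.ne'] using (tendsto_posPartSqQuot_of_pos hu ht (hkκ u)).mul_const (w u)

end Integral

section UniformConvergence

variable {ι α : Type*} {l : Filter ι} {f : ι → α → ℝ} {f₀ : α → ℝ}

lemma tendstoUniformly_of_forall_eventually_abs_sub_le
    (h : ∀ ε > 0, ∀ᶠ i in l, ∀ u, |f i u - f₀ u| ≤ ε) : TendstoUniformly f f₀ l :=
  Metric.tendstoUniformly_iff.2 fun ε hε => (h (ε / 2) (half_pos hε)).mono fun i hi u => by
    rw [dist_comm, Real.dist_eq]
    linarith [hi u]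

lemma TendstoUniformly.eventually_forall_abs_le (h : TendstoUniformly f f₀ l) {C : ℝ}
    (hC : ∀ u, |f₀ u| ≤ C) : ∀ᶠ i in l, ∀ u, |f i u| ≤ C + 1 :=
  (Metric.tendstoUniformly_iff.1 h 1 one_pos).mono fun i hi u => by
    have := abs_sub_abs_le_abs_sub (f i u) (f₀ u)
    rw [← Real.dist_eq, dist_comm] at this
    linarith [hi u, hC u]

end UniformConvergence

theorem stochastic_dominance_second_order_hadamard_general
    (w : ℝ → ℝ) (hwint : Integrable w)
    (θ1 θ2 : ℝ → ℝ) (hθ1m : Measurable θ1) (hθ1b : ∃ C, ∀ u, |θ1 u| ≤ C)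
    (hθ2m : Measurable θ2) (hθ2b : ∃ C, ∀ u, |θ2 u| ≤ C)
    (t : ℕ → ℝ) (ht : ∀ n, 0 < t n) (htlim : Tendsto t atTop (𝓝 0))
    (h1 h2 : ℕ → ℝ → ℝ) (hl1 hl2 : ℝ → ℝ)
    (hh1m : ∀ n, Measurable (h1 n))
    (hh2m : ∀ n, Measurable (h2 n))
    (hl1b : ∃ C, ∀ u, |hl1 u| ≤ C)
    (hl2b : ∃ C, ∀ u, |hl2 u| ≤ C)
    (hconv1 : ∀ ε > (0 : ℝ), ∀ᶠ n in atTop, ∀ u, |h1 n u - hl1 u| ≤ ε)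
    (hconv2 : ∀ ε > (0 : ℝ), ∀ᶠ n in atTop, ∀ u, |h2 n u - hl2 u| ≤ ε) :
    Tendsto (fun n =>
        ((∫ u, (max ((θ1 u + t n * h1 n u) - (θ2 u + t n * h2 n u)) 0) ^ 2 * w u)
          - (∫ u, (max (θ1 u - θ2 u) 0) ^ 2 * w u)
          - 2 * t n * ∫ u in {u | θ2 u < θ1 u},
              (θ1 u - θ2 u) * (h1 n u - h2 n u) * w u) / (t n) ^ 2)
      atTop
      (𝓝 ((∫ u in {u | θ1 u = θ2 u}, (max (hl1 u - hl2 u) 0) ^ 2 * w u)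
            + ∫ u in {u | θ2 u < θ1 u}, (hl1 u - hl2 u) ^ 2 * w u)) := by
  have hk : TendstoUniformly (fun n u => h1 n u - h2 n u) (fun u => hl1 u - hl2 u) atTop :=
    (tendstoUniformly_of_forall_eventually_abs_sub_le hconv1).sub
      (tendstoUniformly_of_forall_eventually_abs_sub_le hconv2)
  obtain ⟨C1, hC1⟩ := hl1b
  obtain ⟨C2, hC2⟩ := hl2b
  have hkb := hk.eventually_forall_abs_le fun u =>
    (abs_sub _ _).trans (add_le_add (hC1 u) (hC2 u))
  have hg : MemLp (fun u => θ1 u - θ2 u) ∞ :=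
    (memLp_top_of_exists_abs_le hθ1m.aestronglyMeasurable hθ1b).sub
      (memLp_top_of_exists_abs_le hθ2m.aestronglyMeasurable hθ2b)
  have hlim := tendsto_integral_posPartSqQuot_mul hwint (hθ1m.sub hθ2m)
    (fun n => ((hh1m n).sub (hh2m n)).aestronglyMeasurable) hkb hk.tendsto_at
    (tendsto_nhdsWithin_iff.2 ⟨htlim, Eventually.of_forall ht⟩)
  simp only [Pi.sub_apply, sub_eq_zero, sub_pos] at hlim
  refine hlim.congr' ?_
  filter_upwards [hkb] with n hn
  have hkn : MemLp (fun u => h1 n u - h2 n u) ∞ :=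
    memLp_top_of_exists_abs_le ((hh1m n).sub (hh2m n)).aestronglyMeasurable ⟨_, hn⟩
  rw [integral_posPartSqQuot_mul hwint hg hkn]
  simp_rw [add_sub_add_comm, ← mul_sub, mul_assoc _ _ (w _),
    setIntegral_lt_eq_integral_max hθ1m hθ2m]

/-- Lemma C.1(ii): second order Hadamard directional derivative of the stochastic dominance
functional `φ(θ) = ∫ max{θ⁽¹⁾ − θ⁽²⁾, 0}² w du`, namely
`(φ(θ + t_n h_n) − φ(θ) − t_n φ′_θ(h_n))/t_n² →
  ∫_{B₀(θ)} max{h⁽¹⁾ − h⁽²⁾, 0}² w du + ∫_{B₊(θ)} (h⁽¹⁾ − h⁽²⁾)² w du`. -/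
theorem stochastic_dominance_second_order_hadamard
    (w : ℝ → ℝ) (hw0 : ∀ u, 0 ≤ w u) (hwm : Measurable w) (hwint : Integrable w)
    (θ1 θ2 : ℝ → ℝ) (hθ1m : Measurable θ1) (hθ1b : ∃ C, ∀ u, |θ1 u| ≤ C)
    (hθ2m : Measurable θ2) (hθ2b : ∃ C, ∀ u, |θ2 u| ≤ C)
    (t : ℕ → ℝ) (ht : ∀ n, 0 < t n) (htlim : Tendsto t atTop (𝓝 0))
    (h1 h2 : ℕ → ℝ → ℝ) (hl1 hl2 : ℝ → ℝ)
    (hh1m : ∀ n, Measurable (h1 n)) (hh1b : ∀ n, ∃ C, ∀ u, |h1 n u| ≤ C)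
    (hh2m : ∀ n, Measurable (h2 n)) (hh2b : ∀ n, ∃ C, ∀ u, |h2 n u| ≤ C)
    (hl1m : Measurable hl1) (hl1b : ∃ C, ∀ u, |hl1 u| ≤ C)
    (hl2m : Measurable hl2) (hl2b : ∃ C, ∀ u, |hl2 u| ≤ C)
    (hconv1 : ∀ ε > (0 : ℝ), ∀ᶠ n in atTop, ∀ u, |h1 n u - hl1 u| ≤ ε)
    (hconv2 : ∀ ε > (0 : ℝ), ∀ᶠ n in atTop, ∀ u, |h2 n u - hl2 u| ≤ ε) :
    Tendsto (fun n =>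
        ((∫ u, (max ((θ1 u + t n * h1 n u) - (θ2 u + t n * h2 n u)) 0) ^ 2 * w u)
          - (∫ u, (max (θ1 u - θ2 u) 0) ^ 2 * w u)
          - 2 * t n * ∫ u in {u | θ2 u < θ1 u},
              (θ1 u - θ2 u) * (h1 n u - h2 n u) * w u) / (t n) ^ 2)
      atTop
      (𝓝 ((∫ u in {u | θ1 u = θ2 u}, (max (hl1 u - hl2 u) 0) ^ 2 * w u)
            + ∫ u in {u | θ2 u < θ1 u}, (hl1 u - hl2 u) ^ 2 * w u)) :=
  stochastic_dominance_second_order_hadamard_general w hwint θ1 θ2 hθ1m hθ1b hθ2m hθ2b t ht htlim h1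
    h2 hl1 hl2 hh1m hh2m hl1b hl2b hconv1 hconv2
end

section
/- (Lemma C.2(ii), Kolmogorov–Smirnov conditional moment inequality functional, second order derivative.) Let F be a nonempty compact metric space. For a pair θ = (θ⁽¹⁾, θ⁽²⁾) of bounded real-valued functions on F define φ(θ) = sup_{f ∈ F} { max{θ⁽¹⁾(f), 0}² + θ⁽²⁾(f)² }. Suppose θ⁽¹⁾ is continuous with θ⁽¹⁾(f) ≤ 0 for all f ∈ F, and θ⁽²⁾ ≡ 0. Let F₀ = {f ∈ F : θ⁽¹⁾(f) = 0}. Then for every sequence t_n ↓ 0 and every sequence of pairs h_n of bounded functions on F converging in supremum norm (coordinatewise) to a pair h = (h⁽¹⁾, h⁽²⁾) of continuous functions on F, one has φ(θ + t_n h_n)/t_n² → max{ sup_{f ∈ F₀} ( max{h⁽¹⁾(f), 0}² + h⁽²⁾(f)² ), sup_{f ∈ F∖F₀} h⁽²⁾(f)² }, where the supremum over an empty set is taken to be 0. -/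
/-!
For `t > 0`, `φ(θ + t h)/t² = sup_f (max(θ⁽¹⁾ f / t + h⁽¹⁾ f, 0)² + h⁽²⁾(f)²)`. Since `θ⁽¹⁾ ≤ 0`,
the positive part is at most `max(h⁽¹⁾ f, 0)`, so replacing `h_n` by `h` changes this by
`O(‖h_n - h‖_∞)` uniformly in `t`. For the limit direction the value is at least the claimed
limit for every `t > 0`: on `F₀` the term is `max(h⁽¹⁾, 0)² + (h⁽²⁾)²`, off `F₀` it is at least
`(h⁽²⁾)²`. Conversely, by compactness the points where `max(h⁽¹⁾, 0)² + (h⁽²⁾)²` exceeds the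
limit by a fixed amount satisfy `θ⁽¹⁾ ≤ -δ` for some `δ > 0`, and there the positive part
vanishes once `t` is small.
-/

open Filter Topology Set

lemma abs_sq_sub_sq_le {p q C η : ℝ} (hq : |q| ≤ C) (hpq : |p - q| ≤ η) :
    |p ^ 2 - q ^ 2| ≤ η * (2 * C + η) := by
  have hsum : |p + q| ≤ 2 * C + η := by
    calc |p + q| = |(p - q) + 2 * q| := by ring_nf
      _ ≤ |p - q| + 2 * |q| := by
          simpa [abs_mul] using abs_add_le (p - q) (2 * q)
      _ ≤ 2 * C + η := by linarith
  rw [sq_sub_sq, abs_mul]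
  exact mul_le_mul hsum hpq (abs_nonneg _) ((abs_nonneg _).trans hsum) |>.trans_eq (mul_comm _ _)

lemma max_div_add_le_max {θ t a : ℝ} (hθ : θ ≤ 0) (ht : 0 ≤ t) :
    max (θ / t + a) 0 ≤ max a 0 :=
  max_le_max_right 0 (add_le_of_nonpos_left (div_nonpos_of_nonpos_of_nonneg hθ ht))

namespace Real

lemma le_biSup {X : Type*} {u : X → ℝ} {s : Set X} (hu : BddAbove (range u)) {x : X}
    (hx : x ∈ s) : u x ≤ ⨆ y ∈ s, u y := by
  obtain ⟨M, hM⟩ := hu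
  refine le_ciSup_of_le ⟨max M 0, ?_⟩ x (ciSup_pos (f := fun _ => u x) hx).ge
  rintro _ ⟨y, rfl⟩
  exact Real.iSup_le (fun _ => (hM (mem_range_self y)).trans (le_max_left _ _)) (le_max_right _ _)

lemma abs_iSup_sub_iSup_le {ι : Sort*} {g G : ι → ℝ} {δ : ℝ} (hg : ∀ i, 0 ≤ g i) (hG : ∀ i, 0 ≤ G i)
    (hGb : BddAbove (range G)) (hδ : 0 ≤ δ) (h : ∀ i, |g i - G i| ≤ δ) :
    |(⨆ i, g i) - ⨆ i, G i| ≤ δ := by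
  have hgb : BddAbove (range g) := by
    obtain ⟨M, hM⟩ := hGb
    refine ⟨M + δ, ?_⟩
    rintro _ ⟨i, rfl⟩
    linarith [hM (mem_range_self i), (abs_le.1 (h i)).2]
  rw [abs_sub_le_iff]
  constructor
  · refine sub_le_iff_le_add'.2 <| Real.iSup_le (fun i => ?_) (add_nonneg (iSup_nonneg hG) hδ)
    linarith [le_ciSup hGb i, (abs_le.1 (h i)).2]
  · refine sub_le_iff_le_add'.2 <| Real.iSup_le (fun i => ?_) (add_nonneg (iSup_nonneg hg) hδ)
    linarith [le_ciSup hgb i, (abs_le.1 (h i)).1]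

end Real

noncomputable def ksCmi {X : Type*} (u v : X → ℝ) : ℝ :=
  ⨆ x, (max (u x) 0 ^ 2 + v x ^ 2)

/-- Second order derivative of `ksCmi` at `(θ, 0)` in direction `(a, b)`. -/
noncomputable def ksCmiSecondDeriv {X : Type*} (θ a b : X → ℝ) : ℝ :=
  max (⨆ x ∈ {x | θ x = 0}, (max (a x) 0 ^ 2 + b x ^ 2)) (⨆ x ∈ {x | θ x ≠ 0}, b x ^ 2)

section ksCmi

variable {X : Type*}

lemma ksCmiSecondDeriv_nonneg (θ a b : X → ℝ) : 0 ≤ ksCmiSecondDeriv θ a b :=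
  le_max_of_le_right <| Real.iSup_nonneg fun _ => Real.iSup_nonneg fun _ => sq_nonneg _

lemma ksCmi_add_mul_div_sq (u h k : X → ℝ) {t : ℝ} (ht : 0 < t) :
    ksCmi (fun x => u x + t * h x) (fun x => t * k x) / t ^ 2 =
      ksCmi (fun x => u x / t + h x) k := by
  rw [ksCmi, ksCmi, div_eq_mul_inv, Real.iSup_mul_of_nonneg (by positivity)]
  congr 1 with x
  have hmax : max (u x + t * h x) 0 = t * max (u x / t + h x) 0 := by
    rw [mul_max_of_nonneg _ _ ht.le, mul_zero, mul_add, mul_div_cancel₀ _ ht.ne']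
  rw [hmax]
  field_simp

lemma abs_ksCmi_sub_ksCmi_le {u v u' v' : X → ℝ} {C η : ℝ} (hC : 0 ≤ C)
    (hu' : ∀ x, max (u' x) 0 ≤ C) (hv' : ∀ x, |v' x| ≤ C) (hη : 0 ≤ η) (hu : ∀ x, |u x - u' x| ≤ η)
    (hv : ∀ x, |v x - v' x| ≤ η) :
    |ksCmi u v - ksCmi u' v'| ≤ 2 * η * (2 * C + η) := by
  have hmax (x : X) : |max (u' x) 0| ≤ C := (abs_of_nonneg (le_max_right _ _)).trans_le (hu' x)
  refine Real.abs_iSup_sub_iSup_le (fun _ => by positivity) (fun _ => by positivity) ?_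
    (by positivity) fun x => ?_
  · refine ⟨C ^ 2 + C ^ 2, ?_⟩
    rintro _ ⟨x, rfl⟩
    have h1 := pow_le_pow_left₀ (le_max_right _ _) (hu' x) 2
    have h2 := pow_le_pow_left₀ (abs_nonneg _) (hv' x) 2
    rw [sq_abs] at h2
    exact add_le_add h1 h2
  · have h1 := abs_sq_sub_sq_le (hmax x) ((abs_max_sub_max_le_abs _ _ _).trans (hu x))
    have h2 := abs_sq_sub_sq_le (hv' x) (hv x)
    calc _ = |(max (u x) 0 ^ 2 - max (u' x) 0 ^ 2) + (v x ^ 2 - v' x ^ 2)| := by ring_nf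
      _ ≤ _ := (abs_add_le _ _).trans (by linarith)

end ksCmi

lemma tendsto_ksCmi_sub_ksCmi {ι X : Type*} {l : Filter ι} {u v u' v' : ι → X → ℝ} {C : ℝ}
    (hC : 0 ≤ C) (hu' : ∀ i x, max (u' i x) 0 ≤ C) (hv' : ∀ i x, |v' i x| ≤ C)
    (hu : ∀ η > (0 : ℝ), ∀ᶠ i in l, ∀ x, |u i x - u' i x| ≤ η)
    (hv : ∀ η > (0 : ℝ), ∀ᶠ i in l, ∀ x, |v i x - v' i x| ≤ η) :
    Tendsto (fun i => ksCmi (u i) (v i) - ksCmi (u' i) (v' i)) l (𝓝 0) := by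
  rw [Metric.tendsto_nhds]
  intro ε hε
  obtain ⟨η, hηε, hη⟩ : ∃ η, 2 * η * (2 * C + η) < ε ∧ 0 < η := by
    have hcont : Tendsto (fun η : ℝ => 2 * η * (2 * C + η)) (𝓝[>] 0) (𝓝 0) := by
      have : Continuous (fun η : ℝ => 2 * η * (2 * C + η)) := by fun_prop
      simpa using (this.tendsto 0).mono_left nhdsWithin_le_nhds
    exact ((hcont.eventually (gt_mem_nhds hε)).and self_mem_nhdsWithin).exists
  filter_upwards [hu η hη, hv η hη] with i hui hvi
  rw [Real.dist_0_eq_abs]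
  exact (abs_ksCmi_sub_ksCmi_le hC (hu' i) (hv' i) hη.le hui hvi).trans_lt hηε

lemma exists_pos_forall_lt_of_neg_lt {X : Type*} [TopologicalSpace X] [CompactSpace X]
    {θ Ψ : X → ℝ} (hθ : Continuous θ) (hΨ : Continuous Ψ) {c : ℝ}
    (h : ∀ x, c ≤ Ψ x → θ x < 0) : ∃ δ > 0, ∀ x, -δ < θ x → Ψ x < c := by
  have hK : IsCompact {x | c ≤ Ψ x} := (isClosed_le continuous_const hΨ).isCompact
  obtain ⟨δ, hδ, hδK⟩ := hK.exists_forall_le' hθ.neg.continuousOn fun x hx => neg_pos.2 (h x hx)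
  refine ⟨δ, hδ, fun x hx => lt_of_not_ge fun hcx => ?_⟩
  have : δ ≤ -θ x := hδK x hcx
  linarith

section Limit

variable {X : Type*} [TopologicalSpace X] [CompactSpace X] {θ a b : X → ℝ}

lemma ksCmiSecondDeriv_le_ksCmi (ha : Continuous a) (hb : Continuous b) (hθ : ∀ x, θ x ≤ 0)
    {t : ℝ} (ht : 0 < t) : ksCmiSecondDeriv θ a b ≤ ksCmi (fun x => θ x / t + a x) b := by
  have hbdd : BddAbove (range fun x => max (θ x / t + a x) 0 ^ 2 + b x ^ 2) := by
    have hΨ : Continuous fun x => max (a x) 0 ^ 2 + b x ^ 2 := by fun_prop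
    obtain ⟨M, hM⟩ := (isCompact_range hΨ).bddAbove
    refine ⟨M, ?_⟩
    rintro _ ⟨x, rfl⟩
    refine le_trans ?_ (hM (mem_range_self x))
    exact add_le_add (pow_le_pow_left₀ (le_max_right _ _)
      (max_div_add_le_max (hθ x) ht.le) 2) le_rfl
  have hnonneg : 0 ≤ ksCmi (fun x => θ x / t + a x) b := Real.iSup_nonneg fun _ => by positivity
  refine max_le (Real.iSup_le (fun x => Real.iSup_le (fun hx => ?_) hnonneg) hnonneg)
    (Real.iSup_le (fun x => Real.iSup_le (fun _ => ?_) hnonneg) hnonneg)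
  · refine le_of_eq_of_le ?_ (le_ciSup hbdd x)
    simp only [show θ x = 0 from hx, zero_div, zero_add]
  · exact le_ciSup_of_le hbdd x (le_add_of_nonneg_left (by positivity))

lemma eventually_ksCmi_le (hθc : Continuous θ) (ha : Continuous a) (hb : Continuous b)
    (hθ : ∀ x, θ x ≤ 0) {c : ℝ} (hc : ksCmiSecondDeriv θ a b < c) :
    ∀ᶠ t in 𝓝[>] 0, ksCmi (fun x => θ x / t + a x) b ≤ c := by
  have hΨ : Continuous fun x => max (a x) 0 ^ 2 + b x ^ 2 := by fun_prop
  obtain ⟨δ, hδ, hnear⟩ := exists_pos_forall_lt_of_neg_lt hθc hΨ (c := c) fun x hx =>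
    (hθ x).lt_of_ne fun h0 => hx.not_gt <| (Real.le_biSup (isCompact_range hΨ).bddAbove
      (show x ∈ {x | θ x = 0} from h0)).trans_lt ((le_max_left _ _).trans_lt hc)
  obtain ⟨A, hA⟩ := (isCompact_range ha).bddAbove
  filter_upwards [self_mem_nhdsWithin, tendsto_inv_nhdsGT_zero.eventually_ge_atTop (A / δ)]
    with t (ht : 0 < t) hinv
  refine Real.iSup_le (fun x => ?_) ((ksCmiSecondDeriv_nonneg θ a b).trans hc.le)
  by_cases hx : -δ < θ x
  · have hmax := pow_le_pow_left₀ (le_max_right _ _) (max_div_add_le_max (a := a x) (hθ x) ht.le) 2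
    linarith [hnear x hx]
  · have hθx : θ x ≤ -δ := le_of_not_gt hx
    have hneg : θ x / t + a x ≤ 0 := by
      have : θ x * t⁻¹ ≤ -δ * (A / δ) := by nlinarith [inv_pos.2 ht]
      rw [div_eq_mul_inv]
      linarith [hA (mem_range_self x), mul_div_cancel₀ A hδ.ne']
    have hb2 : b x ^ 2 ≤ ⨆ y ∈ {y | θ y ≠ 0}, b y ^ 2 :=
      Real.le_biSup (isCompact_range (hb.pow 2)).bddAbove (show θ x ≠ 0 by linarith)
    have hS2 : ⨆ y ∈ {y | θ y ≠ 0}, b y ^ 2 < c := (le_max_right _ _).trans_lt hc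
    rw [max_eq_right hneg]
    linarith

theorem tendsto_ksCmi_div_add (hθc : Continuous θ) (ha : Continuous a) (hb : Continuous b)
    (hθ : ∀ x, θ x ≤ 0) :
    Tendsto (fun t => ksCmi (fun x => θ x / t + a x) b) (𝓝[>] 0)
      (𝓝 (ksCmiSecondDeriv θ a b)) := by
  refine tendsto_order.2 ⟨fun c hc => ?_, fun c hc => ?_⟩
  · filter_upwards [self_mem_nhdsWithin] with t ht
    exact hc.trans_le (ksCmiSecondDeriv_le_ksCmi ha hb hθ ht)
  · filter_upwards [eventually_ksCmi_le hθc ha hb hθ (c := (ksCmiSecondDeriv θ a b + c) / 2)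
      (by linarith)] with t ht
    linarith

end Limit

theorem ks_cmi_second_order_hadamard_general
    (F : Type*) [MetricSpace F] [CompactSpace F]
    (θ1 : F → ℝ) (hθ1c : Continuous θ1) (hθ1np : ∀ f, θ1 f ≤ 0)
    (t : ℕ → ℝ) (ht : ∀ n, 0 < t n) (htlim : Tendsto t atTop (𝓝 0))
    (h1 h2 : ℕ → F → ℝ) (hl1 hl2 : F → ℝ)
    (hl1c : Continuous hl1) (hl2c : Continuous hl2)
    (hconv1 : ∀ ε > (0 : ℝ), ∀ᶠ n in atTop, ∀ f, |h1 n f - hl1 f| ≤ ε)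
    (hconv2 : ∀ ε > (0 : ℝ), ∀ᶠ n in atTop, ∀ f, |h2 n f - hl2 f| ≤ ε) :
    Tendsto (fun n =>
        (⨆ f : F, ((max (θ1 f + t n * h1 n f) 0) ^ 2 + (t n * h2 n f) ^ 2)) / (t n) ^ 2)
      atTop
      (𝓝 (max (⨆ f ∈ {f : F | θ1 f = 0}, ((max (hl1 f) 0) ^ 2 + (hl2 f) ^ 2))
              (⨆ f ∈ {f : F | θ1 f ≠ 0}, (hl2 f) ^ 2))) := by
  obtain ⟨C, hC, hbound⟩ :=
    (isCompact_range (hl1c.prodMk hl2c)).isBounded.exists_pos_norm_le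
  have hl1C (f : F) : |hl1 f| ≤ C := (norm_prod_le_iff.1 (hbound _ (mem_range_self f))).1
  have hl2C (f : F) : |hl2 f| ≤ C := (norm_prod_le_iff.1 (hbound _ (mem_range_self f))).2
  have ht' : Tendsto t atTop (𝓝[>] 0) := tendsto_nhdsWithin_iff.2 ⟨htlim, .of_forall ht⟩
  have hdiff := tendsto_ksCmi_sub_ksCmi (u := fun n f => θ1 f / t n + h1 n f)
    (u' := fun n f => θ1 f / t n + hl1 f) (v := h2) (v' := fun _ => hl2) hC.le
    (fun n f => (max_div_add_le_max (hθ1np f) (ht n).le).trans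
      (max_le ((le_abs_self _).trans (hl1C f)) hC.le))
    (fun _ => hl2C)
    (fun η hη => (hconv1 η hη).mono fun n hn f => by
      simpa only [add_sub_add_left_eq_sub] using hn f)
    hconv2
  have hlim := ((tendsto_ksCmi_div_add hθ1c hl1c hl2c hθ1np).comp ht').add hdiff
  rw [add_zero] at hlim
  refine hlim.congr fun n => ?_
  rw [Function.comp_apply, add_sub_cancel, ← ksCmi_add_mul_div_sq _ _ _ (ht n)]
  rfl

/-- Lemma C.2(ii): second order Hadamard directional derivative of the Kolmogorov–Smirnov
conditional moment inequality functional `φ(θ) = sup_{f∈F} { max{θ⁽¹⁾(f),0}² + θ⁽²⁾(f)² }`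
at `θ = (θ⁽¹⁾, 0)` with `θ⁽¹⁾ ≤ 0` continuous:
`φ(θ + t_n h_n)/t_n² → max{ sup_{F₀} (max{h⁽¹⁾,0}² + (h⁽²⁾)²), sup_{F∖F₀} (h⁽²⁾)² }`,
where `F₀ = {f : θ⁽¹⁾(f) = 0}` and suprema over empty sets are `0`. -/
theorem ks_cmi_second_order_hadamard
    (F : Type*) [MetricSpace F] [CompactSpace F] [Nonempty F]
    (θ1 : F → ℝ) (hθ1c : Continuous θ1) (hθ1np : ∀ f, θ1 f ≤ 0)
    (t : ℕ → ℝ) (ht : ∀ n, 0 < t n) (htlim : Tendsto t atTop (𝓝 0))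
    (h1 h2 : ℕ → F → ℝ) (hl1 hl2 : F → ℝ)
    (hh1b : ∀ n, ∃ C, ∀ f, |h1 n f| ≤ C) (hh2b : ∀ n, ∃ C, ∀ f, |h2 n f| ≤ C)
    (hl1c : Continuous hl1) (hl2c : Continuous hl2)
    (hconv1 : ∀ ε > (0 : ℝ), ∀ᶠ n in atTop, ∀ f, |h1 n f - hl1 f| ≤ ε)
    (hconv2 : ∀ ε > (0 : ℝ), ∀ᶠ n in atTop, ∀ f, |h2 n f - hl2 f| ≤ ε) :
    Tendsto (fun n =>
        (⨆ f : F, ((max (θ1 f + t n * h1 n f) 0) ^ 2 + (t n * h2 n f) ^ 2)) / (t n) ^ 2)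
      atTop
      (𝓝 (max (⨆ f ∈ {f : F | θ1 f = 0}, ((max (hl1 f) 0) ^ 2 + (hl2 f) ^ 2))
              (⨆ f ∈ {f : F | θ1 f ≠ 0}, (hl2 f) ^ 2))) :=
  ks_cmi_second_order_hadamard_general F θ1 hθ1c hθ1np t ht htlim h1 h2 hl1 hl2 hl1c hl2c hconv1
    hconv2
end

section
/- (Lemma C.3(i), GMM overidentification functional, first order degeneracy.) Let Γ ⊂ ℝ^k be nonempty and compact, let W be an m×m real symmetric positive definite matrix, and for a bounded function θ : Γ → ℝ^m define φ(θ) = inf_{γ ∈ Γ} θ(γ)ᵀ W θ(γ). Suppose θ(γ₀) = 0 for some γ₀ ∈ Γ, so that φ(θ) = 0. Then for every sequence t_n ↓ 0 and every sequence of bounded functions h_n : Γ → ℝ^m converging in supremum norm to a bounded function h : Γ → ℝ^m, one has φ(θ + t_n h_n)/t_n → 0; that is, φ is Hadamard differentiable at θ with identically zero derivative. -/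
open Filter Topology Matrix

/-!
At `γ₀` the perturbed function equals `t_n • h_n γ₀`, so by 2-homogeneity of the quadratic form
`Q v = vᵀ W v` the infimum lies between `0` and `t_n ^ 2 * Q (h_n γ₀)`. Dividing by `t_n` leaves
`t_n * Q (h_n γ₀)`, and `Q (h_n γ₀) → Q (h γ₀)`, so the quotient tends to `0`.
-/

theorem tendsto_of_forall_eventually_norm_sub_le {α E : Type*} [SeminormedAddCommGroup E]
    {l : Filter α} {u : α → E} {a : E} (hu : ∀ ε > (0 : ℝ), ∀ᶠ x in l, ‖u x - a‖ ≤ ε) :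
    Tendsto u l (𝓝 a) :=
  Metric.tendsto_nhds.mpr fun ε hε =>
    (hu (ε / 2) (half_pos hε)).mono fun x hx => by rw [dist_eq_norm]; linarith

theorem Matrix.PosSemidef.dotProduct_mulVec_self_nonneg {n : Type*} [Fintype n]
    {M : Matrix n n ℝ} (hM : M.PosSemidef) (x : n → ℝ) : 0 ≤ x ⬝ᵥ M *ᵥ x := by
  simpa using hM.dotProduct_mulVec_nonneg x

section InfimumOfQuadratic

variable {ι E : Type*} [AddCommGroup E] [Module ℝ E] {Q : E → ℝ}

theorem ciInf_add_smul_div_mem_Icc (hQ : ∀ v, 0 ≤ Q v)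
    (hQsmul : ∀ (c : ℝ) v, Q (c • v) = c ^ 2 * Q v)
    {θ v : ι → E} {i₀ : ι} (hθ : θ i₀ = 0) {t : ℝ} (ht : 0 < t) :
    (⨅ i, Q (θ i + t • v i)) / t ∈ Set.Icc 0 (t * Q (v i₀)) := by
  have : Nonempty ι := ⟨i₀⟩
  have hbdd : BddBelow (Set.range fun i => Q (θ i + t • v i)) :=
    ⟨0, by rintro _ ⟨i, rfl⟩; exact hQ _⟩
  have hle : ⨅ i, Q (θ i + t • v i) ≤ t ^ 2 * Q (v i₀) := by
    simpa [hθ, hQsmul] using ciInf_le hbdd i₀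
  constructor
  · exact div_nonneg (le_ciInf fun i => hQ _) ht.le
  · rw [div_le_iff₀ ht]
    linarith

theorem tendsto_ciInf_add_smul_div_zero [TopologicalSpace E] (hQ : ∀ v, 0 ≤ Q v)
    (hQsmul : ∀ (c : ℝ) v, Q (c • v) = c ^ 2 * Q v) (hQc : Continuous Q)
    {θ : ι → E} {i₀ : ι} (hθ : θ i₀ = 0) {t : ℕ → ℝ} (ht : ∀ n, 0 < t n)
    (htlim : Tendsto t atTop (𝓝 0)) {v : ℕ → ι → E} {w : E}
    (hv : Tendsto (fun n => v n i₀) atTop (𝓝 w)) :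
    Tendsto (fun n => (⨅ i, Q (θ i + t n • v n i)) / t n) atTop (𝓝 0) := by
  have hbound : Tendsto (fun n => t n * Q (v n i₀)) atTop (𝓝 0) := by
    simpa using htlim.mul ((hQc.tendsto w).comp hv)
  refine squeeze_zero (fun n => ?_) (fun n => ?_) hbound
  · exact (ciInf_add_smul_div_mem_Icc hQ hQsmul hθ (ht n)).1
  · exact (ciInf_add_smul_div_mem_Icc hQ hQsmul hθ (ht n)).2

end InfimumOfQuadratic

theorem gmm_overid_first_order_degeneracy_general
    (k m : ℕ) (Γ : Set (EuclideanSpace ℝ (Fin k)))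
    (W : Matrix (Fin m) (Fin m) ℝ) (hWpd : W.PosDef)
    (θ : EuclideanSpace ℝ (Fin k) → EuclideanSpace ℝ (Fin m))
    (γ₀ : EuclideanSpace ℝ (Fin k)) (hγ₀ : γ₀ ∈ Γ) (hθγ₀ : θ γ₀ = 0)
    (t : ℕ → ℝ) (ht : ∀ n, 0 < t n) (htlim : Tendsto t atTop (𝓝 0))
    (hn : ℕ → EuclideanSpace ℝ (Fin k) → EuclideanSpace ℝ (Fin m))
    (h : EuclideanSpace ℝ (Fin k) → EuclideanSpace ℝ (Fin m))
    (hconv : ∀ ε > (0 : ℝ), ∀ᶠ n in atTop, ∀ γ ∈ Γ, ‖hn n γ - h γ‖ ≤ ε) :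
    Tendsto (fun n =>
        (⨅ γ : Γ, (θ (γ : EuclideanSpace ℝ (Fin k)) + t n • hn n γ) ⬝ᵥ
            W.mulVec (θ (γ : EuclideanSpace ℝ (Fin k)) + t n • hn n γ)) / t n)
      atTop (𝓝 0) := by
  let Q : EuclideanSpace ℝ (Fin m) → ℝ := fun v => v ⬝ᵥ W *ᵥ v
  have hQc : Continuous Q := by
    have hofLp := PiLp.continuous_ofLp 2 (fun _ : Fin m => ℝ)
    exact hofLp.dotProduct (continuous_const.matrix_mulVec hofLp)
  have hQsmul (c : ℝ) (v : EuclideanSpace ℝ (Fin m)) : Q (c • v) = c ^ 2 * Q v := by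
    simp only [Q, WithLp.ofLp_smul, mulVec_smul, smul_dotProduct, dotProduct_smul, smul_eq_mul]
    ring
  have hconv₀ : Tendsto (fun n => hn n γ₀) atTop (𝓝 (h γ₀)) :=
    tendsto_of_forall_eventually_norm_sub_le fun ε hε =>
      (hconv ε hε).mono fun _ hclose => hclose γ₀ hγ₀
  exact tendsto_ciInf_add_smul_div_zero (Q := Q)
    (fun v => hWpd.posSemidef.dotProduct_mulVec_self_nonneg v) hQsmul hQc
    (i₀ := (⟨γ₀, hγ₀⟩ : Γ)) hθγ₀ ht htlim hconv₀

/-- Lemma C.3(i): the GMM overidentification functional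
`φ(θ) = inf_{γ∈Γ} θ(γ)ᵀ W θ(γ)` (with `Γ ⊂ ℝ^k` nonempty compact and `W` symmetric positive
definite) is Hadamard differentiable with identically zero derivative at any bounded `θ`
vanishing at some `γ₀ ∈ Γ`: `φ(θ + t_n h_n)/t_n → 0`. -/
theorem gmm_overid_first_order_degeneracy
    (k m : ℕ) (Γ : Set (EuclideanSpace ℝ (Fin k))) (hΓne : Γ.Nonempty) (hΓc : IsCompact Γ)
    (W : Matrix (Fin m) (Fin m) ℝ) (hWsymm : W.IsSymm) (hWpd : W.PosDef)
    (θ : EuclideanSpace ℝ (Fin k) → EuclideanSpace ℝ (Fin m))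
    (hθb : ∃ C, ∀ γ ∈ Γ, ‖θ γ‖ ≤ C)
    (γ₀ : EuclideanSpace ℝ (Fin k)) (hγ₀ : γ₀ ∈ Γ) (hθγ₀ : θ γ₀ = 0)
    (t : ℕ → ℝ) (ht : ∀ n, 0 < t n) (htlim : Tendsto t atTop (𝓝 0))
    (hn : ℕ → EuclideanSpace ℝ (Fin k) → EuclideanSpace ℝ (Fin m))
    (h : EuclideanSpace ℝ (Fin k) → EuclideanSpace ℝ (Fin m))
    (hhnb : ∀ n, ∃ C, ∀ γ ∈ Γ, ‖hn n γ‖ ≤ C) (hhb : ∃ C, ∀ γ ∈ Γ, ‖h γ‖ ≤ C)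
    (hconv : ∀ ε > (0 : ℝ), ∀ᶠ n in atTop, ∀ γ ∈ Γ, ‖hn n γ - h γ‖ ≤ ε) :
    Tendsto (fun n =>
        (⨅ γ : Γ, (θ (γ : EuclideanSpace ℝ (Fin k)) + t n • hn n γ) ⬝ᵥ
            W.mulVec (θ (γ : EuclideanSpace ℝ (Fin k)) + t n • hn n γ)) / t n)
      atTop (𝓝 0) :=
  gmm_overid_first_order_degeneracy_general k m Γ W hWpd θ γ₀ hγ₀ hθγ₀ t ht htlim hn h hconv
end

section
/- (Lemma D.1(i), common conditionally heteroskedastic features functional, first order degeneracy.) Let S^k = {γ ∈ ℝ^k : ‖γ‖ = 1} and for a bounded function θ : S^k → ℝ^m define φ(θ) = inf_{γ ∈ S^k} ‖θ(γ)‖². Suppose θ(γ₀) = 0 for some γ₀ ∈ S^k, so that φ(θ) = 0. Then for every sequence t_n ↓ 0 and every sequence of bounded functions h_n : S^k → ℝ^m converging in supremum norm to a bounded function h : S^k → ℝ^m, one has φ(θ + t_n h_n)/t_n → 0; that is, φ is Hadamard differentiable at θ with identically zero derivative. -/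
/-!
Evaluating the infimum at the zero `γ₀` of `θ` gives
`0 ≤ φ(θ + t hₙ) ≤ t² ‖hₙ(γ₀)‖²`, so `|φ(θ + t hₙ)/t| ≤ |t| ‖hₙ(γ₀)‖²`. Since `hₙ(γ₀) → h(γ₀)`,
the right-hand side tends to `0` as `t → 0`.
-/

open Filter Topology

section
variable {ι E : Type*} [NormedAddCommGroup E] [NormedSpace ℝ E] {f : ι → E} {i₀ : ι}

theorem iInf_norm_add_smul_sq_le (hf : f i₀ = 0) (c : ℝ) (g : ι → E) :
    ⨅ i, ‖f i + c • g i‖ ^ 2 ≤ c ^ 2 * ‖g i₀‖ ^ 2 :=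
  calc ⨅ i, ‖f i + c • g i‖ ^ 2 ≤ ‖f i₀ + c • g i₀‖ ^ 2 :=
        ciInf_le ⟨0, by rintro _ ⟨i, rfl⟩; positivity⟩ i₀
    _ = c ^ 2 * ‖g i₀‖ ^ 2 := by
        rw [hf, zero_add, norm_smul, mul_pow, Real.norm_eq_abs, sq_abs]

theorem abs_iInf_norm_add_smul_sq_div_le (hf : f i₀ = 0) (c : ℝ) (g : ι → E) :
    |(⨅ i, ‖f i + c • g i‖ ^ 2) / c| ≤ |c| * ‖g i₀‖ ^ 2 := by
  have hnonneg : 0 ≤ ⨅ i, ‖f i + c • g i‖ ^ 2 := Real.iInf_nonneg fun i => by positivity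
  rw [abs_div, abs_of_nonneg hnonneg]
  rcases eq_or_ne c 0 with rfl | hc
  · simp
  rw [div_le_iff₀ (abs_pos.mpr hc)]
  calc ⨅ i, ‖f i + c • g i‖ ^ 2 ≤ c ^ 2 * ‖g i₀‖ ^ 2 := iInf_norm_add_smul_sq_le hf c g
    _ = |c| * ‖g i₀‖ ^ 2 * |c| := by rw [← sq_abs c]; ring

theorem tendsto_iInf_norm_add_smul_sq_div_of_eq_zero {α : Type*} {l : Filter α}
    (hf : f i₀ = 0) {c : α → ℝ} (hc : Tendsto c l (𝓝 0)) {g : α → ι → E} {v : E}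
    (hg : Tendsto (fun a => g a i₀) l (𝓝 v)) :
    Tendsto (fun a => (⨅ i, ‖f i + c a • g a i‖ ^ 2) / c a) l (𝓝 0) := by
  have hbound : Tendsto (fun a => |c a| * ‖g a i₀‖ ^ 2) l (𝓝 0) := by
    simpa using hc.abs.mul (hg.norm.pow 2)
  exact squeeze_zero_norm (fun a => abs_iInf_norm_add_smul_sq_div_le hf (c a) (g a)) hbound

end

theorem common_ch_first_order_degeneracy_general
    (k m : ℕ)
    (θ : EuclideanSpace ℝ (Fin k) → EuclideanSpace ℝ (Fin m))
    (γ₀ : EuclideanSpace ℝ (Fin k)) (hγ₀ : ‖γ₀‖ = 1) (hθγ₀ : θ γ₀ = 0)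
    (t : ℕ → ℝ) (htlim : Tendsto t atTop (𝓝 0))
    (hn : ℕ → EuclideanSpace ℝ (Fin k) → EuclideanSpace ℝ (Fin m))
    (h : EuclideanSpace ℝ (Fin k) → EuclideanSpace ℝ (Fin m))
    (hconv : ∀ ε > (0 : ℝ), ∀ᶠ n in atTop,
      ∀ γ : EuclideanSpace ℝ (Fin k), ‖γ‖ = 1 → ‖hn n γ - h γ‖ ≤ ε) :
    Tendsto (fun n =>
        (⨅ γ : {γ : EuclideanSpace ℝ (Fin k) // ‖γ‖ = 1},
            ‖θ (γ : EuclideanSpace ℝ (Fin k)) + t n • hn n γ‖ ^ 2) / t n)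
      atTop (𝓝 0) := by
  have hγ₀conv : Tendsto (fun n => hn n γ₀) atTop (𝓝 (h γ₀)) := by
    refine Metric.tendsto_nhds.mpr fun ε hε => ?_
    filter_upwards [hconv (ε / 2) (half_pos hε)] with n hn_close
    rw [dist_eq_norm]
    linarith [hn_close γ₀ hγ₀]
  exact tendsto_iInf_norm_add_smul_sq_div_of_eq_zero
    (i₀ := (⟨γ₀, hγ₀⟩ : {γ : EuclideanSpace ℝ (Fin k) // ‖γ‖ = 1})) hθγ₀ htlim hγ₀conv

/-- Lemma D.1(i): the common-CH-features functional `φ(θ) = inf_{γ∈S^k} ‖θ(γ)‖²` on the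
unit sphere is Hadamard differentiable with identically zero derivative at any bounded `θ`
vanishing at some unit vector `γ₀`: `φ(θ + t_n h_n)/t_n → 0`. -/
theorem common_ch_first_order_degeneracy
    (k m : ℕ)
    (θ : EuclideanSpace ℝ (Fin k) → EuclideanSpace ℝ (Fin m))
    (hθb : ∃ C, ∀ γ : EuclideanSpace ℝ (Fin k), ‖γ‖ = 1 → ‖θ γ‖ ≤ C)
    (γ₀ : EuclideanSpace ℝ (Fin k)) (hγ₀ : ‖γ₀‖ = 1) (hθγ₀ : θ γ₀ = 0)
    (t : ℕ → ℝ) (ht : ∀ n, 0 < t n) (htlim : Tendsto t atTop (𝓝 0))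
    (hn : ℕ → EuclideanSpace ℝ (Fin k) → EuclideanSpace ℝ (Fin m))
    (h : EuclideanSpace ℝ (Fin k) → EuclideanSpace ℝ (Fin m))
    (hhnb : ∀ n, ∃ C, ∀ γ : EuclideanSpace ℝ (Fin k), ‖γ‖ = 1 → ‖hn n γ‖ ≤ C)
    (hhb : ∃ C, ∀ γ : EuclideanSpace ℝ (Fin k), ‖γ‖ = 1 → ‖h γ‖ ≤ C)
    (hconv : ∀ ε > (0 : ℝ), ∀ᶠ n in atTop,
      ∀ γ : EuclideanSpace ℝ (Fin k), ‖γ‖ = 1 → ‖hn n γ - h γ‖ ≤ ε) :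
    Tendsto (fun n =>
        (⨅ γ : {γ : EuclideanSpace ℝ (Fin k) // ‖γ‖ = 1},
            ‖θ (γ : EuclideanSpace ℝ (Fin k)) + t n • hn n γ‖ ^ 2) / t n)
      atTop (𝓝 0) :=
  common_ch_first_order_degeneracy_general k m θ γ₀ hγ₀ hθγ₀ t htlim hn h hconv
end

section
/- (Lemma D.1(ii), second order directional derivative of the common-CH-features functional, stated with the analytic hypotheses established in its proof.) Let Δ₁, …, Δ_m be real symmetric k×k matrices, let θ₀ : S^k → ℝ^m be given by θ₀(γ) = (γᵀΔ₁γ, …, γᵀΔ_mγ), and let Γ₀ = {γ ∈ S^k : θ₀(γ) = 0}. Assume: (a) Γ₀ ≠ ∅; (b) Δ_j γ₀ = 0 for every γ₀ ∈ Γ₀ and every j = 1,…,m; (c) there exist C > 0 and ε̄ > 0 such that for every ε ∈ (0, ε̄] and every γ ∈ S^k with dist(γ, Γ₀) ≥ ε one has ‖θ₀(γ)‖ ≥ C ε². Then for every sequence t_n ↓ 0 and every sequence of bounded functions h_n : S^k → ℝ^m converging in supremum norm to a continuous function h : S^k → ℝ^m, one has (inf_{γ ∈ S^k} ‖θ₀(γ)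 + t_n h_n(γ)‖²)/t_n² → inf_{γ₀ ∈ Γ₀} inf_{v ∈ ℝ^k} ‖h(γ₀) + (vᵀΔ₁v, …, vᵀΔ_mv)‖². -/
/-!
Write `Q v = (vᵀΔ₁v, …, vᵀΔₘv)`. `Q` is homogeneous of degree two and, because every `Δⱼ`
annihilates `Γ₀`, `Q (γ₀ + w) = Q w` for `γ₀ ∈ Γ₀`; hence `Q (γ₀ + √t • v) = t • Q v`.
After dividing by `t²` the objective becomes `(inf_γ ‖t⁻¹ • Q γ + hₙ γ‖)²`.
Upper bound: evaluate at the normalisation of `γ₀ + √t • v`, which tends to `γ₀`.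
Lower bound: if `dist(γ, Γ₀) ≥ ε ≍ √t`, the separation bound makes `t⁻¹ • Q γ` dominate `hₙ γ`;
otherwise `γ = γ₀ + √t • v` with `γ₀ ∈ Γ₀` close to `γ`, and `‖Q v + hₙ γ‖ ≥ ‖h γ₀ + Q v‖ - o(1)`
by uniform convergence of `hₙ` and uniform continuity of `h` on the compact sphere.
-/

open Filter Topology Matrix Set

lemma iInf_sq_of_nonneg {ι : Sort*} {f : ι → ℝ} (hf : ∀ i, 0 ≤ f i) :
    ⨅ i, f i ^ 2 = (⨅ i, f i) ^ 2 := by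
  rcases isEmpty_or_nonempty ι with hι | hι
  · simp [Real.iInf_of_isEmpty]
  have hmono : MonotoneOn (· ^ 2 : ℝ → ℝ) (range f) := by
    rintro _ ⟨i, rfl⟩ _ ⟨j, rfl⟩ hij
    exact pow_le_pow_left₀ (hf i) hij 2
  rw [iInf, iInf, hmono.map_csInf_of_continuousWithinAt (continuous_pow 2).continuousWithinAt
    (range_nonempty f) ⟨0, forall_mem_range.2 hf⟩, ← range_comp]
  rfl

lemma ciInf_le_of_nonneg {ι : Sort*} {f : ι → ℝ} (hf : ∀ i, 0 ≤ f i) (i : ι) : ⨅ j, f j ≤ f i :=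
  ciInf_le ⟨0, forall_mem_range.2 hf⟩ i

section QuadraticMap

lemma dotProduct_mulVec_add_of_mulVec_eq_zero {n R : Type*} [Fintype n] [CommRing R]
    {A : Matrix n n R} (hA : A.IsSymm) {a : n → R} (ha : A *ᵥ a = 0) (w : n → R) :
    (a + w) ⬝ᵥ A *ᵥ (a + w) = w ⬝ᵥ A *ᵥ w := by
  have h : a ⬝ᵥ A *ᵥ w = 0 := by
    rw [dotProduct_mulVec, ← mulVec_transpose, hA.eq, ha, zero_dotProduct]
  simp [mulVec_add, add_dotProduct, ha, h]

variable {k m : ℕ}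

noncomputable def quadMap (Δ : Fin m → Matrix (Fin k) (Fin k) ℝ) (v : EuclideanSpace ℝ (Fin k)) :
    EuclideanSpace ℝ (Fin m) :=
  WithLp.toLp 2 fun j => v ⬝ᵥ Δ j *ᵥ v

lemma quadMap_smul (Δ : Fin m → Matrix (Fin k) (Fin k) ℝ) (c : ℝ) (v : EuclideanSpace ℝ (Fin k)) :
    quadMap Δ (c • v) = c ^ 2 • quadMap Δ v := by
  ext j
  simp [quadMap, mulVec_smul]
  ring

lemma quadMap_add_of_mulVec_eq_zero {Δ : Fin m → Matrix (Fin k) (Fin k) ℝ}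
    (hΔ : ∀ j, (Δ j).IsSymm) {a : EuclideanSpace ℝ (Fin k)} (ha : ∀ j, Δ j *ᵥ a = 0)
    (w : EuclideanSpace ℝ (Fin k)) : quadMap Δ (a + w) = quadMap Δ w := by
  ext j
  exact dotProduct_mulVec_add_of_mulVec_eq_zero (hΔ j) (ha j) w

end QuadraticMap

section ScaledInf

variable {E F : Type*} [NormedAddCommGroup E] [NormedAddCommGroup F] [NormedSpace ℝ F]

noncomputable def scaledInf (Q g : E → F) (τ : ℝ) : ℝ :=
  ⨅ γ : {γ : E // ‖γ‖ = 1}, ‖τ⁻¹ • Q γ + g γ‖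

lemma scaledInf_le (Q g : E → F) (τ : ℝ) {γ : E} (hγ : ‖γ‖ = 1) :
    scaledInf Q g τ ≤ ‖τ⁻¹ • Q γ + g γ‖ :=
  ciInf_le_of_nonneg (fun _ => norm_nonneg _) (⟨γ, hγ⟩ : {γ : E // ‖γ‖ = 1})

lemma iInf_norm_add_smul_sq_div (Q g : E → F) {τ : ℝ} (hτ : 0 < τ) :
    (⨅ γ : {γ : E // ‖γ‖ = 1}, ‖Q γ + τ • g γ‖ ^ 2) / τ ^ 2 = scaledInf Q g τ ^ 2 := by
  have h (γ : E) : ‖Q γ + τ • g γ‖ ^ 2 = τ ^ 2 * ‖τ⁻¹ • Q γ + g γ‖ ^ 2 := by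
    have e : Q γ + τ • g γ = τ • (τ⁻¹ • Q γ + g γ) := by rw [smul_add, smul_inv_smul₀ hτ.ne']
    rw [e, norm_smul, Real.norm_of_nonneg hτ.le, mul_pow]
  simp_rw [h, ← Real.mul_iInf_of_nonneg (sq_nonneg τ), scaledInf,
    iInf_sq_of_nonneg (fun _ => norm_nonneg _)]
  field_simp

lemma map_add_sqrt_smul [NormedSpace ℝ E] {Q : E → F}
    (hsmul : ∀ (c : ℝ) v, Q (c • v) = c ^ 2 • Q v) {γ₀ : E} (hshift : ∀ w, Q (γ₀ + w) = Q w)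
    {τ : ℝ} (hτ : 0 ≤ τ) (v : E) :
    Q (γ₀ + √τ • v) = τ • Q v := by
  rw [hshift, hsmul, Real.sq_sqrt hτ]

lemma eventually_scaledInf_lt [NormedSpace ℝ E] {Q : E → F}
    (hsmul : ∀ (c : ℝ) v, Q (c • v) = c ^ 2 • Q v) {γ₀ : E} (hγ₀ : ‖γ₀‖ = 1)
    (hshift : ∀ w, Q (γ₀ + w) = Q w)
    {t : ℕ → ℝ} (ht : ∀ n, 0 < t n) (htlim : Tendsto t atTop (𝓝 0))
    {hn : ℕ → E → F} {h : E → F} (hunif : TendstoUniformlyOn hn h atTop {γ | ‖γ‖ = 1})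
    (hh : ContinuousWithinAt h {γ | ‖γ‖ = 1} γ₀) (v : E) {a : ℝ} (ha : ‖h γ₀ + Q v‖ < a) :
    ∀ᶠ n in atTop, scaledInf Q (hn n) (t n) < a := by
  set u : ℕ → E := fun n => γ₀ + √(t n) • v
  have hu : Tendsto u atTop (𝓝 γ₀) := by
    simpa using tendsto_const_nhds.add (htlim.sqrt.smul_const v)
  have hnorm : Tendsto (fun n => ‖u n‖) atTop (𝓝 1) := by simpa [hγ₀] using hu.norm
  have hr : Tendsto (fun n => ‖u n‖⁻¹) atTop (𝓝 1) := by simpa using hnorm.inv₀ one_ne_zero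
  set γ : ℕ → E := fun n => ‖u n‖⁻¹ • u n
  have hγ : Tendsto γ atTop (𝓝 γ₀) := by simpa using hr.smul hu
  have hγ_mem : ∀ᶠ n in atTop, ‖γ n‖ = 1 :=
    (hnorm.eventually (eventually_gt_nhds one_pos)).mono fun n hn => by
      simp [γ, norm_smul, hn.ne']
  have hQγ (n : ℕ) : (t n)⁻¹ • Q (γ n) = ‖u n‖⁻¹ ^ 2 • Q v := by
    rw [hsmul, map_add_sqrt_smul hsmul hshift (ht n).le, smul_comm, inv_smul_smul₀ (ht n).ne']
  have hlim : Tendsto (fun n => ‖(t n)⁻¹ • Q (γ n) + hn n (γ n)‖) atTop (𝓝 ‖h γ₀ + Q v‖) := by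
    simp_rw [hQγ]
    have := ((hr.pow 2).smul_const (Q v)).add
      (hunif.tendsto_comp hh (tendsto_nhdsWithin_iff.2 ⟨hγ, hγ_mem⟩))
    simpa [add_comm] using this.norm
  filter_upwards [hlim.eventually (eventually_lt_nhds ha), hγ_mem] with n hlt hmem
  exact (scaledInf_le _ _ _ hmem).trans_lt hlt

lemma le_norm_inv_smul_add {q y : F} {τ c b : ℝ} (hτ : 0 < τ) (hq : (c + b) * τ ≤ ‖q‖)
    (hy : ‖y‖ ≤ b) : c ≤ ‖τ⁻¹ • q + y‖ := by
  have hq' : c + b ≤ ‖τ⁻¹ • q‖ := by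
    rwa [norm_smul, norm_inv, Real.norm_of_nonneg hτ.le, le_inv_mul_iff₀ hτ, mul_comm]
  linarith [norm_le_add_norm_add (τ⁻¹ • q) y]

lemma inv_smul_map_eq_map [NormedSpace ℝ E] {Q : E → F}
    (hsmul : ∀ (c : ℝ) v, Q (c • v) = c ^ 2 • Q v) {γ₀ : E} (hshift : ∀ w, Q (γ₀ + w) = Q w)
    {τ : ℝ} (hτ : 0 < τ) (γ : E) : τ⁻¹ • Q γ = Q ((√τ)⁻¹ • (γ - γ₀)) := by
  have hs : √τ ≠ 0 := (Real.sqrt_pos.2 hτ).ne'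
  conv_lhs => rw [← add_sub_cancel γ₀ γ, ← smul_inv_smul₀ hs (γ - γ₀),
    map_add_sqrt_smul hsmul hshift hτ.le, inv_smul_smul₀ hτ.ne']

lemma sub_le_norm_inv_smul_add [NormedSpace ℝ E] {Q : E → F}
    (hsmul : ∀ (c : ℝ) v, Q (c • v) = c ^ 2 • Q v) {γ₀ : E} (hshift : ∀ w, Q (γ₀ + w) = Q w)
    {τ ℓ ρ : ℝ} (hτ : 0 < τ) {z y : F} (hℓ : ∀ v, ℓ ≤ ‖z + Q v‖) (hy : ‖z - y‖ ≤ ρ) (γ : E) :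
    ℓ - ρ ≤ ‖τ⁻¹ • Q γ + y‖ := by
  rw [inv_smul_map_eq_map hsmul hshift hτ]
  set q := Q ((√τ)⁻¹ • (γ - γ₀))
  have : ‖z + q‖ ≤ ‖q + y‖ + ‖z - y‖ :=
    calc ‖z + q‖ = ‖(q + y) + (z - y)‖ := by congr 1; abel
      _ ≤ _ := norm_add_le _ _
  linarith [hℓ ((√τ)⁻¹ • (γ - γ₀))]

lemma eventually_sub_le_scaledInf [NormedSpace ℝ E] [ProperSpace E] {Q : E → F}
    (hsmul : ∀ (c : ℝ) v, Q (c • v) = c ^ 2 • Q v) {Γ₀ : Set E} (hΓ₀ : Γ₀ ⊆ {γ | ‖γ‖ = 1})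
    (hΓ₀ne : Γ₀.Nonempty) (hshift : ∀ γ₀ ∈ Γ₀, ∀ w, Q (γ₀ + w) = Q w) {C εbar : ℝ}
    (hC : 0 < C) (hεbar : 0 < εbar)
    (hsep : ∀ ε ∈ Set.Ioc (0 : ℝ) εbar, ∀ γ : E, ‖γ‖ = 1 →
      ε ≤ Metric.infDist γ Γ₀ → C * ε ^ 2 ≤ ‖Q γ‖)
    {t : ℕ → ℝ} (ht : ∀ n, 0 < t n) (htlim : Tendsto t atTop (𝓝 0))
    {hn : ℕ → E → F} {h : E → F} (hunif : TendstoUniformlyOn hn h atTop {γ | ‖γ‖ = 1})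
    (hh : ContinuousOn h {γ | ‖γ‖ = 1}) {ρ : ℝ} (hρ : 0 < ρ) :
    ∀ᶠ n in atTop, (⨅ γ₀ : Γ₀, ⨅ v, ‖h γ₀ + Q v‖) - ρ ≤ scaledInf Q (hn n) (t n) := by
  set ℓ := ⨅ γ₀ : Γ₀, ⨅ v, ‖h γ₀ + Q v‖
  have hℓ_le (γ₀ : Γ₀) (v : E) : ℓ ≤ ‖h γ₀ + Q v‖ :=
    (ciInf_le_of_nonneg (fun _ => Real.iInf_nonneg fun _ => norm_nonneg _) γ₀).trans
      (ciInf_le_of_nonneg (fun _ => norm_nonneg _) v)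
  have hℓ : 0 ≤ ℓ := Real.iInf_nonneg fun _ => Real.iInf_nonneg fun _ => norm_nonneg _
  have hS : IsCompact {γ : E | ‖γ‖ = 1} := by
    convert isCompact_sphere (0 : E) 1 using 1
    ext; simp
  obtain ⟨γ₁, hγ₁⟩ := hΓ₀ne
  have : Nonempty {γ : E // ‖γ‖ = 1} := ⟨⟨γ₁, hΓ₀ hγ₁⟩⟩
  obtain ⟨B, hB⟩ := hS.exists_bound_of_continuousOn hh
  have hB0 : 0 ≤ B := (norm_nonneg _).trans (hB γ₁ (hΓ₀ hγ₁))
  obtain ⟨δ, hδ, hδh⟩ := Metric.uniformContinuousOn_iff.1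
    (hS.uniformContinuousOn_of_continuous hh) (ρ / 2) (half_pos hρ)
  -- `ε n ≍ √(t n)`, scaled so that `C * ε n ^ 2` beats `(ℓ + sup ‖hn n‖) * t n`
  set ε : ℕ → ℝ := fun n => √((ℓ + (B + ρ / 2)) * t n / C)
  have hε_sq (n : ℕ) : C * ε n ^ 2 = (ℓ + (B + ρ / 2)) * t n := by
    rw [Real.sq_sqrt (by have := ht n; positivity)]
    field_simp
  have hε_lim : Tendsto ε atTop (𝓝 0) := by simpa using ((htlim.const_mul _).div_const C).sqrt
  filter_upwards [hε_lim.eventually (eventually_lt_nhds (lt_min hεbar hδ)),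
    Metric.tendstoUniformlyOn_iff.1 hunif (ρ / 2) (half_pos hρ)] with n hεn hclose
  refine le_ciInf fun ⟨γ, hγ⟩ => ?_
  have hclose_γ : ‖h γ - hn n γ‖ < ρ / 2 := by rw [← dist_eq_norm]; exact hclose γ hγ
  rcases le_or_gt (ε n) (Metric.infDist γ Γ₀) with hfar | hnear
  · have hε_pos : 0 < ε n := Real.sqrt_pos.2 (by have := ht n; positivity)
    have hQγ := hsep (ε n) ⟨hε_pos, hεn.le.trans (min_le_left _ _)⟩ γ hγ hfar
    rw [hε_sq] at hQγ
    refine (sub_le_self _ hρ.le).trans (le_norm_inv_smul_add (ht n) hQγ ?_)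
    linarith [norm_le_norm_add_norm_sub (h γ) (hn n γ), hB γ hγ]
  · obtain ⟨γ₀, hγ₀, hdist⟩ := (Metric.infDist_lt_iff ⟨γ₁, hγ₁⟩).1 hnear
    have hh_γ : ‖h γ₀ - h γ‖ < ρ / 2 := by
      rw [← dist_eq_norm, dist_comm]
      exact hδh γ hγ γ₀ (hΓ₀ hγ₀) (hdist.trans (hεn.trans_le (min_le_right _ _)))
    refine sub_le_norm_inv_smul_add hsmul (hshift γ₀ hγ₀) (ht n) (hℓ_le ⟨γ₀, hγ₀⟩) ?_ γ
    linarith [norm_sub_le_norm_sub_add_norm_sub (h γ₀) (h γ) (hn n γ)]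

theorem tendsto_scaledInf [NormedSpace ℝ E] [ProperSpace E] {Q : E → F}
    (hsmul : ∀ (c : ℝ) v, Q (c • v) = c ^ 2 • Q v) {Γ₀ : Set E} (hΓ₀ : Γ₀ ⊆ {γ | ‖γ‖ = 1})
    (hΓ₀ne : Γ₀.Nonempty) (hshift : ∀ γ₀ ∈ Γ₀, ∀ w, Q (γ₀ + w) = Q w) {C εbar : ℝ}
    (hC : 0 < C) (hεbar : 0 < εbar)
    (hsep : ∀ ε ∈ Set.Ioc (0 : ℝ) εbar, ∀ γ : E, ‖γ‖ = 1 →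
      ε ≤ Metric.infDist γ Γ₀ → C * ε ^ 2 ≤ ‖Q γ‖)
    {t : ℕ → ℝ} (ht : ∀ n, 0 < t n) (htlim : Tendsto t atTop (𝓝 0))
    {hn : ℕ → E → F} {h : E → F} (hunif : TendstoUniformlyOn hn h atTop {γ | ‖γ‖ = 1})
    (hh : ContinuousOn h {γ | ‖γ‖ = 1}) :
    Tendsto (fun n => scaledInf Q (hn n) (t n)) atTop (𝓝 (⨅ γ₀ : Γ₀, ⨅ v, ‖h γ₀ + Q v‖)) := by
  have := hΓ₀ne.to_subtype
  refine tendsto_order.2 ⟨fun a ha => ?_, fun a ha => ?_⟩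
  · filter_upwards [eventually_sub_le_scaledInf hsmul hΓ₀ hΓ₀ne hshift hC hεbar hsep ht htlim
      hunif hh (half_pos (sub_pos.2 ha))] with n hn
    linarith
  · obtain ⟨γ₀, hγ₀⟩ := exists_lt_of_ciInf_lt ha
    obtain ⟨v, hv⟩ := exists_lt_of_ciInf_lt hγ₀
    exact eventually_scaledInf_lt hsmul (hΓ₀ γ₀.2) (hshift γ₀ γ₀.2) ht htlim hunif
      (hh γ₀ (hΓ₀ γ₀.2)) v hv

end ScaledInf

theorem common_ch_second_order_hadamard_general
    (k m : ℕ) (Δ : Fin m → Matrix (Fin k) (Fin k) ℝ) (hΔsymm : ∀ j, (Δ j).IsSymm)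
    (θ₀ : EuclideanSpace ℝ (Fin k) → EuclideanSpace ℝ (Fin m))
    (hθ₀def : ∀ γ : EuclideanSpace ℝ (Fin k), ∀ j : Fin m, θ₀ γ j = γ ⬝ᵥ (Δ j).mulVec γ)
    (Γ₀ : Set (EuclideanSpace ℝ (Fin k)))
    (hΓ₀def : Γ₀ = {γ : EuclideanSpace ℝ (Fin k) | ‖γ‖ = 1 ∧ θ₀ γ = 0})
    (hΓ₀ne : Γ₀.Nonempty)
    (hker : ∀ γ₀ ∈ Γ₀, ∀ j : Fin m, (Δ j).mulVec γ₀ = 0)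
    (C εbar : ℝ) (hC : 0 < C) (hεbar : 0 < εbar)
    (hsep : ∀ ε ∈ Set.Ioc (0 : ℝ) εbar, ∀ γ : EuclideanSpace ℝ (Fin k), ‖γ‖ = 1 →
      ε ≤ Metric.infDist γ Γ₀ → C * ε ^ 2 ≤ ‖θ₀ γ‖)
    (t : ℕ → ℝ) (ht : ∀ n, 0 < t n) (htlim : Tendsto t atTop (𝓝 0))
    (hn : ℕ → EuclideanSpace ℝ (Fin k) → EuclideanSpace ℝ (Fin m))
    (h : EuclideanSpace ℝ (Fin k) → EuclideanSpace ℝ (Fin m))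
    (hhc : ContinuousOn h {γ : EuclideanSpace ℝ (Fin k) | ‖γ‖ = 1})
    (hconv : ∀ ε > (0 : ℝ), ∀ᶠ n in atTop,
      ∀ γ : EuclideanSpace ℝ (Fin k), ‖γ‖ = 1 → ‖hn n γ - h γ‖ ≤ ε) :
    Tendsto (fun n =>
        (⨅ γ : {γ : EuclideanSpace ℝ (Fin k) // ‖γ‖ = 1},
            ‖θ₀ (γ : EuclideanSpace ℝ (Fin k)) + t n • hn n γ‖ ^ 2) / (t n) ^ 2)
      atTop
      (𝓝 (⨅ γ₀ : Γ₀, ⨅ v : EuclideanSpace ℝ (Fin k),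
            ‖h (γ₀ : EuclideanSpace ℝ (Fin k)) +
              (show EuclideanSpace ℝ (Fin m) from WithLp.toLp 2 (fun j => v ⬝ᵥ (Δ j).mulVec v))‖ ^ 2)) := by
  obtain rfl : θ₀ = quadMap Δ := funext fun γ => PiLp.ext (hθ₀def γ)
  have hunif : TendstoUniformlyOn hn h atTop {γ | ‖γ‖ = 1} :=
    Metric.tendstoUniformlyOn_iff.2 fun ε hε => (hconv (ε / 2) (half_pos hε)).mono
      fun n hn γ hγ => by rw [dist_eq_norm']; exact (hn γ hγ).trans_lt (half_lt_self hε)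
  have hlim := tendsto_scaledInf (quadMap_smul Δ) (fun γ hγ => (hΓ₀def ▸ hγ).1) hΓ₀ne
    (fun γ₀ hγ₀ => quadMap_add_of_mulVec_eq_zero hΔsymm (hker γ₀ hγ₀)) hC hεbar hsep ht htlim
    hunif hhc
  have hL : ⨅ γ₀ : Γ₀, ⨅ v, ‖h γ₀ + quadMap Δ v‖ ^ 2 =
      (⨅ γ₀ : Γ₀, ⨅ v, ‖h γ₀ + quadMap Δ v‖) ^ 2 := by
    simp_rw [iInf_sq_of_nonneg fun _ => norm_nonneg _,
      iInf_sq_of_nonneg fun _ => Real.iInf_nonneg fun _ => norm_nonneg _]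
  change Tendsto _ atTop (𝓝 (⨅ γ₀ : Γ₀, ⨅ v, ‖h γ₀ + quadMap Δ v‖ ^ 2))
  rw [hL]
  exact (hlim.pow 2).congr fun n => (iInf_norm_add_smul_sq_div _ _ (ht n)).symm

/-- Lemma D.1(ii): second order Hadamard directional derivative of the common-CH-features
functional. With `θ₀(γ) = (γᵀΔ₁γ, …, γᵀΔ_mγ)` for symmetric matrices `Δⱼ`, nonempty zero
set `Γ₀ ⊆ S^k` with `Δⱼγ₀ = 0` on `Γ₀`, and the quadratic separation bound
`‖θ₀(γ)‖ ≥ Cε²` off `ε`-neighborhoods of `Γ₀`, one has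
`(inf_{γ∈S^k} ‖θ₀(γ) + t_n h_n(γ)‖²)/t_n² → inf_{γ₀∈Γ₀} inf_{v∈ℝ^k} ‖h(γ₀) + (vᵀΔⱼv)ⱼ‖²`. -/
theorem common_ch_second_order_hadamard
    (k m : ℕ) (Δ : Fin m → Matrix (Fin k) (Fin k) ℝ) (hΔsymm : ∀ j, (Δ j).IsSymm)
    (θ₀ : EuclideanSpace ℝ (Fin k) → EuclideanSpace ℝ (Fin m))
    (hθ₀def : ∀ γ : EuclideanSpace ℝ (Fin k), ∀ j : Fin m, θ₀ γ j = γ ⬝ᵥ (Δ j).mulVec γ)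
    (Γ₀ : Set (EuclideanSpace ℝ (Fin k)))
    (hΓ₀def : Γ₀ = {γ : EuclideanSpace ℝ (Fin k) | ‖γ‖ = 1 ∧ θ₀ γ = 0})
    (hΓ₀ne : Γ₀.Nonempty)
    (hker : ∀ γ₀ ∈ Γ₀, ∀ j : Fin m, (Δ j).mulVec γ₀ = 0)
    (C εbar : ℝ) (hC : 0 < C) (hεbar : 0 < εbar)
    (hsep : ∀ ε ∈ Set.Ioc (0 : ℝ) εbar, ∀ γ : EuclideanSpace ℝ (Fin k), ‖γ‖ = 1 →
      ε ≤ Metric.infDist γ Γ₀ → C * ε ^ 2 ≤ ‖θ₀ γ‖)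
    (t : ℕ → ℝ) (ht : ∀ n, 0 < t n) (htlim : Tendsto t atTop (𝓝 0))
    (hn : ℕ → EuclideanSpace ℝ (Fin k) → EuclideanSpace ℝ (Fin m))
    (h : EuclideanSpace ℝ (Fin k) → EuclideanSpace ℝ (Fin m))
    (hhnb : ∀ n, ∃ D, ∀ γ : EuclideanSpace ℝ (Fin k), ‖γ‖ = 1 → ‖hn n γ‖ ≤ D)
    (hhc : ContinuousOn h {γ : EuclideanSpace ℝ (Fin k) | ‖γ‖ = 1})
    (hconv : ∀ ε > (0 : ℝ), ∀ᶠ n in atTop,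
      ∀ γ : EuclideanSpace ℝ (Fin k), ‖γ‖ = 1 → ‖hn n γ - h γ‖ ≤ ε) :
    Tendsto (fun n =>
        (⨅ γ : {γ : EuclideanSpace ℝ (Fin k) // ‖γ‖ = 1},
            ‖θ₀ (γ : EuclideanSpace ℝ (Fin k)) + t n • hn n γ‖ ^ 2) / (t n) ^ 2)
      atTop
      (𝓝 (⨅ γ₀ : Γ₀, ⨅ v : EuclideanSpace ℝ (Fin k),
            ‖h (γ₀ : EuclideanSpace ℝ (Fin k)) +
              (show EuclideanSpace ℝ (Fin m) from WithLp.toLp 2 (fun j => v ⬝ᵥ (Δ j).mulVec v))‖ ^ 2)) :=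
  common_ch_second_order_hadamard_general k m Δ hΔsymm θ₀ hθ₀def Γ₀ hΓ₀def hΓ₀ne hker C εbar hC
    hεbar hsep t ht htlim hn h hhc hconv
end

section
/- (Lemma D.6.) Fix Δ > 0 and k ∈ ℕ, k ≥ 1. For a unit vector γ₀ ∈ ℝ^k and t ∈ (0,1], define V_t(γ₀) = {v ∈ ℝ^k : ‖γ₀ + √t · v‖ = 1 and ‖v‖ ≤ Δ} and V(γ₀) = {v ∈ ℝ^k : ⟨γ₀, v⟩ = 0 and ‖v‖ ≤ Δ}. Then for every sequence (t_n) in (0,1] with t_n → 0, the supremum over all unit vectors γ₀ ∈ ℝ^k of the Hausdorff distance d_H(V_{t_n}(γ₀), V(γ₀)) converges to 0 as n → ∞. -/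
/-!
For a unit vector `γ₀`, `‖γ₀ + s • v‖ = 1` forces `⟪γ₀, v⟫ = -s‖v‖²/2`, so projecting a point of
`V_{s²}(γ₀)` onto `γ₀ᗮ` moves it by at most `sΔ²/2`. Conversely a tangent vector `w` with `‖w‖ = r`
is pushed back onto the rescaled sphere by `w ↦ √(1 - (sr/2)²) • w - (sr²/2) • γ₀`, which moves it
by at most `sr²`. Hence `d_H(V_t(γ₀), V(γ₀)) ≤ √t Δ²` as soon as `√t Δ ≤ 2`, uniformly in `γ₀`.
-/

open Filter Topology RealInnerProductSpace

section UnitVector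

variable {E : Type*} [NormedAddCommGroup E] [InnerProductSpace ℝ E] {γ₀ : E}

lemma norm_add_smul_sq_of_norm_eq_one (hγ : ‖γ₀‖ = 1) (s : ℝ) (v : E) :
    ‖γ₀ + s • v‖ ^ 2 = 1 + 2 * s * ⟪γ₀, v⟫ + s ^ 2 * ‖v‖ ^ 2 := by
  rw [norm_add_sq_real, real_inner_smul_right, norm_smul, Real.norm_eq_abs, mul_pow, sq_abs, hγ]
  ring

lemma inner_eq_of_norm_add_smul_eq_one (hγ : ‖γ₀‖ = 1) {s : ℝ} (hs : s ≠ 0) {v : E}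
    (hv : ‖γ₀ + s • v‖ = 1) : ⟪γ₀, v⟫ = -(s * ‖v‖ ^ 2) / 2 := by
  have h := norm_add_smul_sq_of_norm_eq_one hγ s v
  rw [hv] at h
  have : s * (2 * ⟪γ₀, v⟫ + s * ‖v‖ ^ 2) = 0 := by linear_combination -h
  linarith [(mul_eq_zero.mp this).resolve_left hs]

lemma exists_inner_eq_zero_dist_eq (hγ : ‖γ₀‖ = 1) (v : E) :
    ∃ w : E, ⟪γ₀, w⟫ = 0 ∧ ‖w‖ ≤ ‖v‖ ∧ dist v w = |⟪γ₀, v⟫| := by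
  refine ⟨v - ⟪γ₀, v⟫ • γ₀, ?_, ?_, ?_⟩
  · rw [inner_sub_right, real_inner_smul_right, real_inner_self_eq_norm_sq, hγ]
    ring
  · have h := norm_sub_sq_real v (⟪γ₀, v⟫ • γ₀)
    rw [real_inner_smul_right, real_inner_comm γ₀ v, norm_smul, Real.norm_eq_abs, hγ, mul_one,
      sq_abs] at h
    exact (pow_le_pow_iff_left₀ (norm_nonneg _) (norm_nonneg _) two_ne_zero).mp
      (by nlinarith [sq_nonneg ⟪γ₀, v⟫])
  · rw [dist_eq_norm, sub_sub_cancel, norm_smul, Real.norm_eq_abs, hγ, mul_one]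

lemma exists_norm_add_smul_eq_one_dist_le (hγ : ‖γ₀‖ = 1) {w : E} (hw : ⟪γ₀, w⟫ = 0)
    {s : ℝ} (hs : 0 ≤ s) (hsw : s * ‖w‖ ≤ 2) :
    ∃ u : E, ‖γ₀ + s • u‖ = 1 ∧ ‖u‖ = ‖w‖ ∧ dist w u ≤ s * ‖w‖ ^ 2 := by
  set r := ‖w‖
  have hr : 0 ≤ r := norm_nonneg w
  set c := Real.sqrt (1 - (s * r / 2) ^ 2)
  have hc_sq : c ^ 2 = 1 - (s * r / 2) ^ 2 :=
    Real.sq_sqrt (by nlinarith [mul_nonneg hs hr])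
  have hc_nonneg : 0 ≤ c := Real.sqrt_nonneg _
  have hc_le : c ≤ 1 := by nlinarith
  have hc_gap : 1 - c ≤ (s * r / 2) ^ 2 := by nlinarith
  set b := -(s * r ^ 2) / 2 with hb
  have hwγ : ⟪w, γ₀⟫ = 0 := by rw [real_inner_comm, hw]
  have hu_inner : ⟪γ₀, c • w + b • γ₀⟫ = b := by
    rw [inner_add_right, real_inner_smul_right, real_inner_smul_right, hw,
      real_inner_self_eq_norm_sq, hγ]
    ring
  have hu_sq : ‖c • w + b • γ₀‖ ^ 2 = r ^ 2 := by
    rw [norm_add_sq_real, real_inner_smul_left, real_inner_smul_right, hwγ, norm_smul, norm_smul,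
      Real.norm_eq_abs, Real.norm_eq_abs, mul_pow, mul_pow, sq_abs, sq_abs, hc_sq, hγ]
    ring
  have hu_norm : ‖c • w + b • γ₀‖ = r :=
    (sq_eq_sq₀ (norm_nonneg _) hr).mp hu_sq
  refine ⟨c • w + b • γ₀, ?_, hu_norm, ?_⟩
  · have h := norm_add_smul_sq_of_norm_eq_one hγ s (c • w + b • γ₀)
    rw [hu_inner, hu_sq] at h
    exact (sq_eq_sq₀ (norm_nonneg _) zero_le_one).mp (by rw [h]; ring)
  · rw [dist_eq_norm, show w - (c • w + b • γ₀) = (1 - c) • w + (-b) • γ₀ by module]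
    calc ‖(1 - c) • w + (-b) • γ₀‖ ≤ ‖(1 - c) • w‖ + ‖(-b) • γ₀‖ := norm_add_le _ _
      _ = (1 - c) * r + s * r ^ 2 / 2 := by
          rw [norm_smul, norm_smul, Real.norm_eq_abs, Real.norm_eq_abs, abs_of_nonneg (by linarith),
            abs_of_nonneg (by rw [hb]; nlinarith [mul_nonneg hs (sq_nonneg r)]), hγ]
          ring
      _ ≤ s * r ^ 2 := by
          nlinarith [mul_le_mul_of_nonneg_right hc_gap hr, mul_nonneg hs (sq_nonneg r),
            mul_le_mul_of_nonneg_right hsw (mul_nonneg hs (sq_nonneg r))]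

lemma hausdorffDist_sphere_slice_tangent_disc_le (hγ : ‖γ₀‖ = 1) {s Δ : ℝ} (hs : 0 < s)
    (hsΔ : s * Δ ≤ 2) :
    Metric.hausdorffDist {v : E | ‖γ₀ + s • v‖ = 1 ∧ ‖v‖ ≤ Δ}
      {v : E | ⟪γ₀, v⟫ = 0 ∧ ‖v‖ ≤ Δ} ≤ s * Δ ^ 2 := by
  apply Metric.hausdorffDist_le_of_mem_dist (by positivity)
  · rintro v ⟨hv, hvΔ⟩
    obtain ⟨w, hw, hwv, hdist⟩ := exists_inner_eq_zero_dist_eq hγ v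
    refine ⟨w, ⟨hw, hwv.trans hvΔ⟩, ?_⟩
    rw [hdist, inner_eq_of_norm_add_smul_eq_one hγ hs.ne' hv, neg_div, abs_neg,
      abs_of_nonneg (div_nonneg (mul_nonneg hs.le (sq_nonneg _)) zero_le_two)]
    have : ‖v‖ ^ 2 ≤ Δ ^ 2 := pow_le_pow_left₀ (norm_nonneg v) hvΔ 2
    nlinarith
  · rintro w ⟨hw, hwΔ⟩
    obtain ⟨u, hu, hun, hdist⟩ := exists_norm_add_smul_eq_one_dist_le hγ hw hs.le
      ((mul_le_mul_of_nonneg_left hwΔ hs.le).trans hsΔ)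
    refine ⟨u, ⟨hu, hun ▸ hwΔ⟩, hdist.trans ?_⟩
    gcongr

end UnitVector

theorem sphere_tangent_set_hausdorff_convergence_general
    (k : ℕ) (Δ : ℝ)
    (t : ℕ → ℝ) (ht : ∀ n, t n ∈ Set.Ioc (0 : ℝ) 1) (htlim : Tendsto t atTop (𝓝 0)) :
    Tendsto (fun n =>
        ⨆ γ₀ : {γ : EuclideanSpace ℝ (Fin k) // ‖γ‖ = 1},
          Metric.hausdorffDist
            {v : EuclideanSpace ℝ (Fin k) |
              ‖(γ₀ : EuclideanSpace ℝ (Fin k)) + Real.sqrt (t n) • v‖ = 1 ∧ ‖v‖ ≤ Δ}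
            {v : EuclideanSpace ℝ (Fin k) |
              inner ℝ (γ₀ : EuclideanSpace ℝ (Fin k)) v = (0 : ℝ) ∧ ‖v‖ ≤ Δ})
      atTop (𝓝 0) := by
  have hsqrt : Tendsto (fun n => Real.sqrt (t n)) atTop (𝓝 0) := by
    simpa [Function.comp_def] using (Real.continuous_sqrt.tendsto 0).comp htlim
  have hbound : Tendsto (fun n => Real.sqrt (t n) * Δ ^ 2) atTop (𝓝 0) := by
    simpa using hsqrt.mul_const (Δ ^ 2)
  have hsmall : ∀ᶠ n in atTop, Real.sqrt (t n) * Δ ≤ 2 := by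
    have h : Tendsto (fun n => Real.sqrt (t n) * Δ) atTop (𝓝 0) := by
      simpa using hsqrt.mul_const Δ
    exact h.eventually (eventually_le_nhds two_pos)
  refine tendsto_of_tendsto_of_tendsto_of_le_of_le' tendsto_const_nhds hbound
    (Eventually.of_forall fun n => Real.iSup_nonneg fun _ => Metric.hausdorffDist_nonneg) ?_
  filter_upwards [hsmall] with n hn
  have hs : 0 < Real.sqrt (t n) := Real.sqrt_pos.mpr (ht n).1
  exact Real.iSup_le (fun γ₀ => hausdorffDist_sphere_slice_tangent_disc_le γ₀.2 hs hn)
    (by positivity)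

/-- Lemma D.6: uniform Hausdorff convergence of the rescaled sphere neighborhoods
`V_t(γ₀) = {v : ‖γ₀ + √t·v‖ = 1, ‖v‖ ≤ Δ}` to the tangent disc
`V(γ₀) = {v : ⟨γ₀, v⟩ = 0, ‖v‖ ≤ Δ}`, uniformly over unit vectors `γ₀`, as `t_n → 0`. -/
theorem sphere_tangent_set_hausdorff_convergence
    (k : ℕ) (hk : 1 ≤ k) (Δ : ℝ) (hΔ : 0 < Δ)
    (t : ℕ → ℝ) (ht : ∀ n, t n ∈ Set.Ioc (0 : ℝ) 1) (htlim : Tendsto t atTop (𝓝 0)) :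
    Tendsto (fun n =>
        ⨆ γ₀ : {γ : EuclideanSpace ℝ (Fin k) // ‖γ‖ = 1},
          Metric.hausdorffDist
            {v : EuclideanSpace ℝ (Fin k) |
              ‖(γ₀ : EuclideanSpace ℝ (Fin k)) + Real.sqrt (t n) • v‖ = 1 ∧ ‖v‖ ≤ Δ}
            {v : EuclideanSpace ℝ (Fin k) |
              inner ℝ (γ₀ : EuclideanSpace ℝ (Fin k)) v = (0 : ℝ) ∧ ‖v‖ ≤ Δ})
      atTop (𝓝 0) :=
  sphere_tangent_set_hausdorff_convergence_general k Δ t ht htlim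
end

section
/- (Algebraic core of Lemma D.7, comparison with the Dovonon–Renault limit.) Let k ≥ 2, let γ₀ ∈ ℝ^k satisfy ∑_{j=1}^k γ₀^{(j)} ≠ 0, and let Δ₁, …, Δ_m be real symmetric k×k matrices with Δ_j γ₀ = 0 for every j. For g ∈ ℝ^m define f : ℝ^k → ℝ by f(v) = ∑_{j=1}^m g_j² + ∑_{j=1}^m g_j (vᵀΔ_j v) + (1/4) ∑_{j=1}^m (vᵀΔ_j v)². Then inf_{v ∈ ℝ^k} f(v) = inf { f(v) : v ∈ ℝ^k, ∑_{j=1}^k v^{(j)} = 0 }; that is, the unrestricted infimum of f equals its infimum over the hyperplane of vectors whose coordinates sum to zero. -/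
/-!
Each quadratic form `v ↦ vᵀΔⱼv` is unchanged by translations along `γ₀`, because `Δⱼ` is
symmetric and kills `γ₀`; hence so is `f`. Since the coordinates of `γ₀` do not sum to zero,
a suitable translate of any `v` lies on the hyperplane, so `f` takes the same values on `ℝᵏ`
as on the hyperplane and the two infima coincide.
-/

open Matrix

theorem iInf_subtype_eq_iInf_of_forall_exists {α β : Type*} [InfSet β] {f : α → β}
    {p : α → Prop} (h : ∀ x, ∃ y, p y ∧ f y = f x) :
    ⨅ y : {y // p y}, f y = ⨅ x, f x := by
  refine congrArg sInf (Set.ext fun b => ⟨?_, ?_⟩)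
  · rintro ⟨y, rfl⟩
    exact ⟨y, rfl⟩
  · rintro ⟨x, rfl⟩
    obtain ⟨y, hy, hfy⟩ := h x
    exact ⟨⟨y, hy⟩, hfy⟩

theorem exists_sum_add_smul_eq_zero {ι K : Type*} [Fintype ι] [Field K] {w : ι → K}
    (hw : ∑ i, w i ≠ 0) (v : ι → K) : ∃ a : K, ∑ i, (v + a • w) i = 0 := by
  refine ⟨-(∑ i, v i) / ∑ i, w i, ?_⟩
  simp only [Pi.add_apply, Pi.smul_apply, smul_eq_mul, Finset.sum_add_distrib,
    ← Finset.mul_sum]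
  field_simp
  ring

theorem Matrix.IsSymm.dotProduct_mulVec_add_smul {n R : Type*} [Fintype n] [CommRing R]
    {A : Matrix n n R} (hA : A.IsSymm) {w : n → R} (hw : A *ᵥ w = 0) (v : n → R) (a : R) :
    (v + a • w) ⬝ᵥ A *ᵥ (v + a • w) = v ⬝ᵥ A *ᵥ v := by
  have hwv : w ⬝ᵥ A *ᵥ v = 0 := by
    rw [dotProduct_mulVec, ← mulVec_transpose, hA.eq, hw, zero_dotProduct]
  rw [mulVec_add, mulVec_smul, hw, smul_zero, add_zero, add_dotProduct, smul_dotProduct, hwv,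
    smul_zero, add_zero]

theorem dovonon_renault_limit_comparison_general
    (k m : ℕ)
    (γ₀ : Fin k → ℝ) (hγ₀ : (∑ j, γ₀ j) ≠ 0)
    (Δ : Fin m → Matrix (Fin k) (Fin k) ℝ) (hΔsymm : ∀ j, (Δ j).IsSymm)
    (hker : ∀ j, (Δ j).mulVec γ₀ = 0)
    (g : Fin m → ℝ) :
    (⨅ v : Fin k → ℝ,
        (∑ j, (g j) ^ 2 + ∑ j, g j * (v ⬝ᵥ (Δ j).mulVec v)
          + (1 / 4) * ∑ j, (v ⬝ᵥ (Δ j).mulVec v) ^ 2)) =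
    (⨅ v : {v : Fin k → ℝ // (∑ j, v j) = 0},
        (∑ j, (g j) ^ 2 + ∑ j, g j * ((v : Fin k → ℝ) ⬝ᵥ (Δ j).mulVec (v : Fin k → ℝ))
          + (1 / 4) * ∑ j, ((v : Fin k → ℝ) ⬝ᵥ (Δ j).mulVec (v : Fin k → ℝ)) ^ 2)) := by
  refine (iInf_subtype_eq_iInf_of_forall_exists fun v => ?_).symm
  obtain ⟨a, ha⟩ := exists_sum_add_smul_eq_zero hγ₀ v
  refine ⟨v + a • γ₀, ha, ?_⟩
  simp only [fun j => (hΔsymm j).dotProduct_mulVec_add_smul (hker j) v a]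

/-- Algebraic core of Lemma D.7: for symmetric matrices `Δⱼ` annihilating `γ₀` whose
coordinates do not sum to zero, the unrestricted infimum of
`f(v) = Σⱼ gⱼ² + Σⱼ gⱼ (vᵀΔⱼv) + (1/4) Σⱼ (vᵀΔⱼv)²` equals its infimum over the
hyperplane `{v : Σⱼ v⁽ʲ⁾ = 0}`. -/
theorem dovonon_renault_limit_comparison
    (k m : ℕ) (hk : 2 ≤ k)
    (γ₀ : Fin k → ℝ) (hγ₀ : (∑ j, γ₀ j) ≠ 0)
    (Δ : Fin m → Matrix (Fin k) (Fin k) ℝ) (hΔsymm : ∀ j, (Δ j).IsSymm)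
    (hker : ∀ j, (Δ j).mulVec γ₀ = 0)
    (g : Fin m → ℝ) :
    (⨅ v : Fin k → ℝ,
        (∑ j, (g j) ^ 2 + ∑ j, g j * (v ⬝ᵥ (Δ j).mulVec v)
          + (1 / 4) * ∑ j, (v ⬝ᵥ (Δ j).mulVec v) ^ 2)) =
    (⨅ v : {v : Fin k → ℝ // (∑ j, v j) = 0},
        (∑ j, (g j) ^ 2 + ∑ j, g j * ((v : Fin k → ℝ) ⬝ᵥ (Δ j).mulVec (v : Fin k → ℝ))
          + (1 / 4) * ∑ j, ((v : Fin k → ℝ) ⬝ᵥ (Δ j).mulVec (v : Fin k → ℝ)) ^ 2)) :=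
  dovonon_renault_limit_comparison_general k m γ₀ hγ₀ Δ hΔsymm hker g
end

section
/- (Extended continuous mapping theorem for convergence in probability; Lemma B.3 with nonrandom maps g_n.) Let (Ω, 𝒜, μ) be a probability space, let (D, d) and (E, ρ) be metric spaces, let D₀ ⊆ D, and let g : D₀ → E. For each n let g_n : D → E be a (nonrandom) function such that g_n(x_n) → g(x) whenever x_n ∈ D, x ∈ D₀ and x_n → x. Let X_n : Ω → D and X : Ω → D be Borel measurable with separable range, with X(ω) ∈ D₀ for μ-almost every ω, and suppose X_n → X in measure, i.e., for every ε > 0, μ{ω : d(X_n(ω), X(ω)) ≥ ε} → 0. Then g_n(X_n) → g(X) in measure: for every ε > 0, μ{ω : ρ(g_n(X_n(ω)), g(X(ω))) ≥ ε} → 0. -/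
/-!
Near a point `x ∈ D₀` the hypothesis on `gₙ` is a uniform statement: `gₙ(y)` is close to `g(x)`
for all large `n` and all `y` near `x`. Hence the open sets of points near which two late members
of the family `gₙ` take values `ε/2` apart shrink, as the tail index grows and the radius shrinks,
to a set missing `D₀`. Since `X` is measurable and almost surely in `D₀`, continuity from above
makes the probability that `X` lies in them small; off this event and off the event that `Xₙ` is
not close to `X`, `gₙ(Xₙ)` is `ε`-close to `g(X)`.
-/

open Filter Topology MeasureTheory Metric Function Set
open scoped ENNReal

section SequentialCharacterization

variable {D E : Type*} [TopologicalSpace D] [TopologicalSpace E] {f : ℕ → D → E} {x : D} {L : E}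

lemma tendsto_extend_of_strictMono {s : ℕ → ℕ} (hs : StrictMono s) {y : ℕ → D}
    (hy : Tendsto y atTop (𝓝 x)) : Tendsto (extend s y fun _ => x) atTop (𝓝 x) := by
  rw [tendsto_atTop_nhds] at hy ⊢
  intro U hxU hU
  obtain ⟨K, hK⟩ := hy U hxU hU
  refine ⟨s K, fun m hm => ?_⟩
  by_cases hm_range : ∃ j, s j = m
  · obtain ⟨j, rfl⟩ := hm_range
    rw [hs.injective.extend_apply]
    exact hK j (hs.le_iff_le.mp hm)
  · rwa [extend_apply' _ _ _ hm_range]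

lemma tendsto_apply_of_strictMono
    (h : ∀ xn : ℕ → D, Tendsto xn atTop (𝓝 x) → Tendsto (fun n => f n (xn n)) atTop (𝓝 L))
    {s : ℕ → ℕ} (hs : StrictMono s) {y : ℕ → D} (hy : Tendsto y atTop (𝓝 x)) :
    Tendsto (fun j => f (s j) (y j)) atTop (𝓝 L) := by
  have := (h _ (tendsto_extend_of_strictMono hs hy)).comp hs.tendsto_atTop
  simpa only [comp_def, hs.injective.extend_apply] using this

theorem tendsto_uncurry_atTop_prod_nhds_iff [FirstCountableTopology D] :
    Tendsto (uncurry f) (atTop ×ˢ 𝓝 x) (𝓝 L) ↔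
      ∀ xn : ℕ → D, Tendsto xn atTop (𝓝 x) → Tendsto (fun n => f n (xn n)) atTop (𝓝 L) := by
  refine ⟨fun h xn hxn => h.comp (tendsto_id.prodMk hxn), fun h => ?_⟩
  refine tendsto_of_seq_tendsto fun p hp => tendsto_of_subseq_tendsto fun ns hns => ?_
  have hp' := hp.comp hns
  obtain ⟨φ, hφ, hmono⟩ := strictMono_subseq_of_tendsto_atTop (tendsto_fst.comp hp')
  exact ⟨φ, tendsto_apply_of_strictMono h hmono ((tendsto_snd.comp hp').comp hφ.tendsto_atTop)⟩

end SequentialCharacterization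

section TailOscillation

variable {D E : Type*} [PseudoMetricSpace D] [PseudoMetricSpace E] (f : ℕ → D → E)

/-- Comparing two members of the family, rather than `f n y` with a limit value at `x`,
makes this set open. -/
def tailOscSet (ε r : ℝ) (N : ℕ) : Set D :=
  ⋃ p ∈ {p : D × D | ∃ n ≥ N, ∃ m ≥ N, ε ≤ dist (f n p.1) (f m p.2)}, ball p.1 r ∩ ball p.2 r

lemma isOpen_tailOscSet (ε r : ℝ) (N : ℕ) : IsOpen (tailOscSet f ε r N) :=
  isOpen_biUnion fun _ _ => isOpen_ball.inter isOpen_ball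

lemma tailOscSet_mono {ε r r' : ℝ} {N N' : ℕ} (hr : r ≤ r') (hN : N' ≤ N) :
    tailOscSet f ε r N ⊆ tailOscSet f ε r' N' :=
  biUnion_mono (fun _ ⟨n, hn, m, hm, h⟩ => ⟨n, hN.trans hn, m, hN.trans hm, h⟩)
    fun _ _ => inter_subset_inter (ball_subset_ball hr) (ball_subset_ball hr)

variable {f}

lemma exists_notMem_tailOscSet {x : D} {L : E} (h : Tendsto (uncurry f) (atTop ×ˢ 𝓝 x) (𝓝 L))
    {ε : ℝ} (hε : 0 < ε) : ∃ r > 0, ∃ N, x ∉ tailOscSet f ε r N := by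
  obtain ⟨⟨N, r⟩, ⟨-, hr⟩, hsub⟩ :=
    (atTop_basis.prod nhds_basis_ball).mem_iff.mp (h (ball_mem_nhds L (half_pos hε)))
  refine ⟨r, hr, N, ?_⟩
  simp only [tailOscSet, mem_iUnion₂, mem_ofPred_eq, not_exists]
  rintro ⟨y, z⟩ ⟨n, hn, m, hm, hdist⟩ ⟨hxy, hxz⟩
  have hy : dist (f n y) L < ε / 2 := hsub (mk_mem_prod hn (mem_ball_comm.mp hxy))
  have hz : dist (f m z) L < ε / 2 := hsub (mk_mem_prod hm (mem_ball_comm.mp hxz))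
  linarith [dist_triangle_right (f n y) (f m z) L]

lemma mem_tailOscSet_of_le_dist {x y : D} {L : E} (hL : Tendsto (fun m => f m x) atTop (𝓝 L))
    {ε r : ℝ} {n N : ℕ} (hε : 0 < ε) (hn : N ≤ n) (hy : dist y x < r)
    (hdist : ε ≤ dist (f n y) L) : x ∈ tailOscSet f (ε / 2) r N := by
  obtain ⟨m, hmL, hm⟩ :=
    ((hL.eventually (ball_mem_nhds L (half_pos hε))).and (eventually_ge_atTop N)).exists
  have hr : 0 < r := dist_nonneg.trans_lt hy
  refine mem_iUnion₂.mpr ⟨(y, x), ⟨n, hn, m, hm, ?_⟩, mem_ball_comm.mp hy, mem_ball_self hr⟩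
  linarith [dist_triangle (f n y) (f m x) L, mem_ball.mp hmL]

end TailOscillation

lemma tendsto_measure_zero_of_antitone {Ω : Type*} [MeasurableSpace Ω] {μ : Measure Ω}
    [IsFiniteMeasure μ] {S : ℕ → Set Ω} (hS : ∀ k, NullMeasurableSet (S k) μ) (hanti : Antitone S)
    (h : ∀ᵐ ω ∂μ, ∃ k, ω ∉ S k) : Tendsto (fun k => μ (S k)) atTop (𝓝 0) := by
  have h0 : μ (⋂ k, S k) = 0 := by
    refine measure_mono_null (fun ω hω => ?_) (ae_iff.mp h)
    exact fun ⟨k, hk⟩ => hk (mem_iInter.mp hω k)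
  have := tendsto_measure_iInter_atTop hS hanti ⟨0, measure_ne_top μ _⟩
  rw [h0] at this
  exact this

lemma tendsto_zero_of_forall_le_add {ι : Type*} {l : Filter ι} {u : ι → ℝ≥0∞}
    {v : ℕ → ι → ℝ≥0∞} {w : ℕ → ℝ≥0∞} (hv : ∀ k, Tendsto (v k) l (𝓝 0))
    (hw : Tendsto w atTop (𝓝 0)) (h : ∀ k, ∀ᶠ i in l, u i ≤ v k i + w k) :
    Tendsto u l (𝓝 0) := by
  simp only [ENNReal.tendsto_nhds_zero] at hv hw ⊢
  intro δ hδ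
  obtain ⟨k, hk⟩ := (hw (δ / 2) (ENNReal.half_pos hδ.ne')).exists
  filter_upwards [h k, hv k (δ / 2) (ENNReal.half_pos hδ.ne')] with i hi hvi
  calc u i ≤ v k i + w k := hi
    _ ≤ δ / 2 + δ / 2 := add_le_add hvi hk
    _ = δ := ENNReal.add_halves δ

theorem extended_cmt_in_measure_general
    {Ω : Type*} [MeasurableSpace Ω] (μ : Measure Ω) [IsProbabilityMeasure μ]
    {D E : Type*} [MetricSpace D] [MetricSpace E] [MeasurableSpace D] [BorelSpace D]
    (D₀ : Set D) (g : D → E) (gn : ℕ → D → E)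
    (hg : ∀ (xn : ℕ → D) (x : D), x ∈ D₀ → Tendsto xn atTop (𝓝 x) →
      Tendsto (fun n => gn n (xn n)) atTop (𝓝 (g x)))
    (Xn : ℕ → Ω → D) (X : Ω → D)
    (hXm : Measurable X)
    (hX₀ : ∀ᵐ ω ∂μ, X ω ∈ D₀)
    (hconv : TendstoInMeasure μ Xn atTop X) :
    TendstoInMeasure μ (fun n ω => gn n (Xn n ω)) atTop (fun ω => g (X ω)) := by
  rw [tendstoInMeasure_iff_dist] at hconv ⊢
  intro ε hε
  set U : ℕ → Set D := fun k => tailOscSet gn (ε / 2) (1 / (k + 1)) k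
  have hU : Tendsto (fun k => μ (X ⁻¹' U k)) atTop (𝓝 0) := by
    refine tendsto_measure_zero_of_antitone
      (fun k => (hXm (isOpen_tailOscSet gn _ _ _).measurableSet).nullMeasurableSet)
      (fun k k' hk => preimage_mono (tailOscSet_mono gn (Nat.one_div_le_one_div hk) hk)) ?_
    filter_upwards [hX₀] with ω hω
    obtain ⟨r, hr, N, hx⟩ := exists_notMem_tailOscSet
      (tendsto_uncurry_atTop_prod_nhds_iff.mpr (hg · _ hω)) (half_pos hε)
    obtain ⟨k, hk⟩ := exists_nat_one_div_lt hr
    exact ⟨max k N, fun hmem => hx (tailOscSet_mono gn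
      ((Nat.one_div_le_one_div (le_max_left k N)).trans hk.le) (le_max_right k N) hmem)⟩
  refine tendsto_zero_of_forall_le_add (fun k => hconv (1 / (k + 1)) Nat.one_div_pos_of_nat)
    hU fun k => ?_
  filter_upwards [eventually_ge_atTop k] with n hn
  refine (measure_mono_ae ?_).trans (measure_union_le _ (X ⁻¹' U k))
  filter_upwards [hX₀] with ω hω hbad
  refine or_iff_not_imp_left.mpr fun hclose => ?_
  exact mem_tailOscSet_of_le_dist (hg (fun _ => X ω) _ hω tendsto_const_nhds) hε hn
    (not_le.mp hclose) hbad

/-- Extended continuous mapping theorem for convergence in probability (Lemma B.3 with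
nonrandom maps `g_n`): if `g_n(x_n) → g(x)` whenever `x_n → x ∈ D₀`, and `X_n → X` in
measure with `X ∈ D₀` almost everywhere, where `X_n, X` are Borel measurable with
separable range, then `g_n(X_n) → g(X)` in measure. -/
theorem extended_cmt_in_measure
    {Ω : Type*} [MeasurableSpace Ω] (μ : Measure Ω) [IsProbabilityMeasure μ]
    {D E : Type*} [MetricSpace D] [MetricSpace E] [MeasurableSpace D] [BorelSpace D]
    (D₀ : Set D) (g : D → E) (gn : ℕ → D → E)
    (hg : ∀ (xn : ℕ → D) (x : D), x ∈ D₀ → Tendsto xn atTop (𝓝 x) →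
      Tendsto (fun n => gn n (xn n)) atTop (𝓝 (g x)))
    (Xn : ℕ → Ω → D) (X : Ω → D)
    (hXnm : ∀ n, Measurable (Xn n)) (hXm : Measurable X)
    (hXnsep : ∀ n, TopologicalSpace.IsSeparable (Set.range (Xn n)))
    (hXsep : TopologicalSpace.IsSeparable (Set.range X))
    (hX₀ : ∀ᵐ ω ∂μ, X ω ∈ D₀)
    (hconv : TendstoInMeasure μ Xn atTop X) :
    TendstoInMeasure μ (fun n ω => gn n (Xn n ω)) atTop (fun ω => g (X ω)) :=
  extended_cmt_in_measure_general μ D₀ g gn hg Xn X hXm hX₀ hconv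
end

section
/- (Continuity of the second order Hadamard directional derivative.) Let D and E be normed spaces, D₀ ⊆ D, θ ∈ D, and let φ : D → E, φ′ : D → E, φ″ : D₀ → E be maps with φ′ continuous. Suppose that for every sequence (t_n) with t_n ↓ 0 and every sequence (h_n) ⊂ D with h_n → h ∈ D₀, one has (φ(θ + t_n h_n) − φ(θ) − t_n φ′(h_n))/t_n² → φ″(h) in E. Then φ″ is continuous on D₀: for every sequence (h_m) ⊂ D₀ and h ∈ D₀ with h_m → h, φ″(h_m) → φ″(h). -/
/-!
Fix `hₘ → h` in `D₀`. For each `m`, the second order quotient at the constant direction `hₘ`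
converges to `φ″(hₘ)`, so we may pick `0 < tₘ < 1/(m+1)` with the quotient at `(tₘ, hₘ)` within
`1/(m+1)` of `φ″(hₘ)`. The diagonal sequence `(tₘ, hₘ)` is admissible in the definition, so its
quotients converge to `φ″(h)`, and hence so do the `φ″(hₘ)`.
-/

open Filter Topology

section ContinuousConvergence

variable {X E : Type*} [PseudoMetricSpace E]

lemma Filter.Tendsto.exists_pos_lt_dist_lt {Q : ℝ → X → E} {x : X} {y : E} {u : ℕ → ℝ}
    (hQ : Tendsto (fun n => Q (u n) x) atTop (𝓝 y)) (hu_pos : ∀ n, 0 < u n)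
    (hu : Tendsto u atTop (𝓝 0)) {δ ε : ℝ} (hδ : 0 < δ) (hε : 0 < ε) :
    ∃ t, 0 < t ∧ t < δ ∧ dist (Q t x) y < ε := by
  obtain ⟨n, hn_small, hn_close⟩ :=
    ((hu.eventually (gt_mem_nhds hδ)).and (Metric.tendsto_nhds.mp hQ ε hε)).exists
  exact ⟨u n, hu_pos n, hn_small, hn_close⟩

variable [TopologicalSpace X]

/-- `hQ` says that `Q t` converges continuously to `g` on `s` as `t → 0⁺`, tested along
sequences. -/
theorem tendsto_comp_of_seq_continuous_convergence {s : Set X} {Q : ℝ → X → E} {g : X → E}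
    (hQ : ∀ t : ℕ → ℝ, (∀ n, 0 < t n) → Tendsto t atTop (𝓝 0) →
      ∀ (x : ℕ → X) (a : X), a ∈ s → Tendsto x atTop (𝓝 a) →
      Tendsto (fun n => Q (t n) (x n)) atTop (𝓝 (g a)))
    {x : ℕ → X} {a : X} (hxs : ∀ m, x m ∈ s) (ha : a ∈ s) (hxa : Tendsto x atTop (𝓝 a)) :
    Tendsto (fun m => g (x m)) atTop (𝓝 (g a)) := by
  set r : ℕ → ℝ := fun m => 1 / (m + 1)
  have hr_pos : ∀ m, 0 < r m := fun m => by positivity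
  have hr : Tendsto r atTop (𝓝 0) := tendsto_one_div_add_atTop_nhds_zero_nat
  have hpick : ∀ m, ∃ t, 0 < t ∧ t < r m ∧ dist (Q t (x m)) (g (x m)) < r m := fun m =>
    (hQ r hr_pos hr (fun _ => x m) (x m) (hxs m) tendsto_const_nhds).exists_pos_lt_dist_lt
      hr_pos hr (hr_pos m) (hr_pos m)
  choose t ht_pos ht_lt hdist using hpick
  have ht : Tendsto t atTop (𝓝 0) :=
    squeeze_zero (fun m => (ht_pos m).le) (fun m => (ht_lt m).le) hr
  exact (hQ t ht_pos ht x a ha hxa).congr_dist <|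
    squeeze_zero (fun _ => dist_nonneg) (fun m => (hdist m).le) hr

end ContinuousConvergence

theorem second_order_derivative_continuous_general
    {D E : Type*} [NormedAddCommGroup D] [NormedSpace ℝ D]
    [NormedAddCommGroup E] [NormedSpace ℝ E]
    (D₀ : Set D) (θ : D) (φ φ' φ'' : D → E)
    (hdiff : ∀ t : ℕ → ℝ, (∀ n, 0 < t n) → Tendsto t atTop (𝓝 0) →
      ∀ (hn : ℕ → D) (h : D), h ∈ D₀ → Tendsto hn atTop (𝓝 h) →
      Tendsto (fun n => ((t n) ^ 2)⁻¹ • (φ (θ + t n • hn n) - φ θ - t n • φ' (hn n)))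
        atTop (𝓝 (φ'' h))) :
    ∀ (hm : ℕ → D) (h : D), (∀ i, hm i ∈ D₀) → h ∈ D₀ → Tendsto hm atTop (𝓝 h) →
      Tendsto (fun i => φ'' (hm i)) atTop (𝓝 (φ'' h)) :=
  fun _ _ hmem hD₀ hlim => tendsto_comp_of_seq_continuous_convergence
    (Q := fun t x => (t ^ 2)⁻¹ • (φ (θ + t • x) - φ θ - t • φ' x)) hdiff hmem hD₀ hlim

/-- Continuity of the second order Hadamard directional derivative: if `φ` is second
order Hadamard directionally differentiable at `θ` tangentially to `D₀` with continuous
first order derivative `φ′` and second order derivative `φ″`, then `φ″` is (sequentially)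
continuous on `D₀`. -/
theorem second_order_derivative_continuous
    {D E : Type*} [NormedAddCommGroup D] [NormedSpace ℝ D]
    [NormedAddCommGroup E] [NormedSpace ℝ E]
    (D₀ : Set D) (θ : D) (φ φ' φ'' : D → E) (hφ' : Continuous φ')
    (hdiff : ∀ t : ℕ → ℝ, (∀ n, 0 < t n) → Tendsto t atTop (𝓝 0) →
      ∀ (hn : ℕ → D) (h : D), h ∈ D₀ → Tendsto hn atTop (𝓝 h) →
      Tendsto (fun n => ((t n) ^ 2)⁻¹ • (φ (θ + t n • hn n) - φ θ - t n • φ' (hn n)))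
        atTop (𝓝 (φ'' h))) :
    ∀ (hm : ℕ → D) (h : D), (∀ i, hm i ∈ D₀) → h ∈ D₀ → Tendsto hm atTop (𝓝 h) →
      Tendsto (fun i => φ'' (hm i)) atTop (𝓝 (φ'' h)) :=
  second_order_derivative_continuous_general D₀ θ φ φ' φ'' hdiff
end
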